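/- arXiv:2211.05175 — 4 statements merged into one kernel-verified Lean document; each statement's English description precedes it below -/
import Mathlib

section
/- Let k ≥ 1. For λ = (λ₀,…,λ_{2k−1}) ∈ ℝ^{2k} set P_λ(x) = x^{2k} + λ_{2k−1}x^{2k−1} + ⋯ + λ₁x + λ₀, let Σ_ℝ = {λ ∈ ℝ^{2k} : P_λ(0) = 0, or there exists x ∈ ℝ with P_λ(x) = 0 and P_λ′(x) = 0}, and for λ ∉ Σ_ℝ let V_λ = {(x,y) ∈ ℝ² : P_λ(x) + y² = 0}. Call a connected component Γ of ℝ^{2k} ∖ Σ_ℝ a lacuna if for every λ ∈ Γ either V_λ is empty or every connected component of V_λ intersects the line {x = 0}. Then exactly 2 connected components of ℝ^{2k} ∖ Σ_ℝ are lacunas. -/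
/-- `P_λ(x) = x^d + λ_{d−1}x^{d−1} + ⋯ + λ₁x + λ₀` for `λ ∈ ℝ^d`. -/
def deformedPoly (d : ℕ) (l : Fin d → ℝ) (x : ℝ) : ℝ :=
  x ^ d + ∑ i, l i * x ^ (i : ℕ)

/-- The real discriminant of the miniversal deformation of the boundary singularity `B_d`. -/
def realDiscrB (d : ℕ) : Set (Fin d → ℝ) :=
  {l | deformedPoly d l 0 = 0 ∨
    ∃ x : ℝ, deformedPoly d l x = 0 ∧ deriv (deformedPoly d l) x = 0}

/-- The real zero level set `V_λ = {(x,y) ∈ ℝ² : P_λ(x) + y² = 0}` of the `B_d⁺` morsification. -/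
def levelSetBplus (d : ℕ) (l : Fin d → ℝ) : Set (ℝ × ℝ) :=
  {p | deformedPoly d l p.1 + p.2 ^ 2 = 0}

/-- A connected component `Γ` of the complement of the real discriminant is a lacuna if for
every `λ ∈ Γ` the level set `V_λ` is empty or each of its connected components meets `{x = 0}`. -/
def IsLacuna (d : ℕ) (V : (Fin d → ℝ) → Set (ℝ × ℝ))
    (Γ : ConnectedComponents ↥((realDiscrB d)ᶜ)) : Prop :=
  ∀ l : ↥((realDiscrB d)ᶜ), ConnectedComponents.mk l = Γ →
    (V l.1 = ∅ ∨ ∀ p ∈ V l.1, ∃ q ∈ connectedComponentIn (V l.1) p, q.1 = 0)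

/-!
Off the real discriminant every real root of `P = P_λ` is simple and `P 0 ≠ 0`. Joining a point
`(x, y)` of `V_λ` to the axis along the arc `t ↦ (t x, ±√(-P (t x)))` shows that every component of
`V_λ` meets `{x = 0}` iff the sublevel set `{P ≤ 0}` is star-shaped about `0`, i.e. iff either
`P > 0` everywhere, or `P 0 < 0` and `P` has exactly two real roots `a < 0 < b`. The first set of
parameters is convex; the second is the image of the convex set `{a < 0 < b, Q > 0}` under
`(a, b, Q) ↦ (x - a)(x - b) Q`. Both are open, because the signs of `P` away from `a, b` and of
`P'` near `a, b` persist under small perturbations (by compactness, and positivity of `P` near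
infinity for even degree), and both are closed in the complement of the discriminant, because
their complements are described by strict inequalities there. Hence they are exactly two of its
components, and the only lacunas.
-/

open Polynomial Set Filter Topology

section Topology

variable {X : Type*} [TopologicalSpace X]

lemma isClopen_preimage_val_of_isOpen {s U V : Set X} (hU : IsOpen U) (hV : IsOpen V)
    (h : ∀ x ∈ s, x ∉ U ↔ x ∈ V) : IsClopen (((↑) : s → X) ⁻¹' U) := by
  refine ⟨?_, hU.preimage continuous_subtype_val⟩
  rw [← isOpen_compl_iff]
  convert hV.preimage continuous_subtype_val using 1
  ext x
  exact h x x.2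

lemma IsPreconnected.preimage_val {s S : Set X} (hS : IsPreconnected S) (hSs : S ⊆ s) :
    IsPreconnected (((↑) : s → X) ⁻¹' S) := by
  rwa [← Topology.IsInducing.subtypeVal.isPreconnected_image, image_preimage_eq_inter_range,
    Subtype.range_coe, inter_eq_left.2 hSs]

lemma IsClopen.connectedComponent_eq {A : Set X} (hA : IsClopen A) (hA' : IsPreconnected A)
    {x : X} (hx : x ∈ A) : connectedComponent x = A :=
  (hA.connectedComponent_subset hx).antisymm (hA'.subset_connectedComponent hx)

lemma card_connectedComponents_subset_union_eq_two {A B : Set X} (hA : IsClopen A)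
    (hB : IsClopen B) (hA' : IsPreconnected A) (hB' : IsPreconnected B) {a b : X} (ha : a ∈ A)
    (hb : b ∈ B) (hAB : Disjoint A B) :
    Nat.card {Γ : ConnectedComponents X // ∀ x, ConnectedComponents.mk x = Γ → x ∈ A ∪ B} = 2 := by
  have hne : ConnectedComponents.mk a ≠ ConnectedComponents.mk b := by
    rw [Ne, ConnectedComponents.coe_eq_coe, hA.connectedComponent_eq hA' ha,
      hB.connectedComponent_eq hB' hb]
    exact fun h => hAB.ne_of_mem (by rw [h]; exact hb) hb rfl
  have hset : {Γ : ConnectedComponents X | ∀ x, ConnectedComponents.mk x = Γ → x ∈ A ∪ B} =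
      {ConnectedComponents.mk a, ConnectedComponents.mk b} := by
    ext Γ
    obtain ⟨x, rfl⟩ := ConnectedComponents.surjective_coe Γ
    simp only [mem_ofPred_eq, mem_insert_iff, mem_singleton_iff, ConnectedComponents.coe_eq_coe]
    constructor
    · intro h
      rcases h x rfl with hx | hx
      · left; rw [hA.connectedComponent_eq hA' hx, hA.connectedComponent_eq hA' ha]
      · right; rw [hB.connectedComponent_eq hB' hx, hB.connectedComponent_eq hB' hb]
    · rintro (h | h) y hy
      · left
        rw [h, hA.connectedComponent_eq hA' ha] at hy
        exact hy ▸ mem_connectedComponent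
      · right
        rw [h, hB.connectedComponent_eq hB' hb] at hy
        exact hy ▸ mem_connectedComponent
  change Nat.card ↥{Γ : ConnectedComponents X | _} = 2
  rw [hset, Nat.card_coe_set_eq, ncard_pair hne]

end Topology

lemma eventually_forall_mem_of_isCompact {X Y Z : Type*} [TopologicalSpace X]
    [TopologicalSpace Y] [TopologicalSpace Z] {g : X × Y → Z} (hg : Continuous g) {K : Set Y}
    (hK : IsCompact K) {U : Set Z} (hU : IsOpen U) {x₀ : X} (h : ∀ y ∈ K, g (x₀, y) ∈ U) :
    ∀ᶠ x in 𝓝 x₀, ∀ y ∈ K, g (x, y) ∈ U :=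
  hK.eventually_forall_of_forall_eventually fun y hy =>
    hg.continuousAt.preimage_mem_nhds (hU.mem_nhds (h y hy))

lemma deriv_sub_mul_self {f : ℝ → ℝ} {a : ℝ} (hf : DifferentiableAt ℝ f a) :
    deriv (fun x => (x - a) * f x) a = f a := by
  simpa using (((hasDerivAt_id a).sub_const a).fun_mul hf.hasDerivAt).deriv

lemma deriv_ne_zero_and_starConvex_of_sign_pattern {f : ℝ → ℝ} (hf : Differentiable ℝ f)
    {l₁ u₁ l₂ u₂ : ℝ} (hu₁ : u₁ ≤ 0) (hl₂ : 0 ≤ l₂) (hleft : ∀ x ≤ l₁, 0 < f x)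
    (hright : ∀ x, u₂ ≤ x → 0 < f x) (hmid : ∀ x ∈ Icc u₁ l₂, f x < 0)
    (hdecr : ∀ x ∈ Icc l₁ u₁, deriv f x < 0) (hincr : ∀ x ∈ Icc l₂ u₂, 0 < deriv f x) :
    (∀ x, f x = 0 → deriv f x ≠ 0) ∧ StarConvex ℝ 0 {x | f x ≤ 0} := by
  have hbound : ∀ x, f x ≤ 0 → l₁ < x ∧ x < u₂ := fun x hx =>
    ⟨not_le.1 fun h => (hleft x h).not_ge hx, not_le.1 fun h => (hright x h).not_ge hx⟩
  refine ⟨fun x hx => ?_, starConvex_zero_iff.2 fun x hx t ht₀ ht₁ => ?_⟩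
  · obtain ⟨h₁, h₂⟩ := hbound x hx.le
    by_cases hxu : x < u₁
    · exact (hdecr x ⟨h₁.le, hxu.le⟩).ne
    by_cases hxl : l₂ < x
    · exact (hincr x ⟨hxl.le, h₂.le⟩).ne'
    · exact absurd hx (hmid x ⟨not_lt.1 hxu, not_lt.1 hxl⟩).ne
  obtain ⟨h₁, h₂⟩ := hbound x hx
  change f (t * x) ≤ 0
  rcases le_total 0 x with hx₀ | hx₀
  · have htx : t * x ≤ x := mul_le_of_le_one_left hx₀ ht₁
    by_cases htl : t * x ≤ l₂
    · exact (hmid _ ⟨hu₁.trans (mul_nonneg ht₀ hx₀), htl⟩).le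
    have hmono : MonotoneOn f (Icc l₂ u₂) := (strictMonoOn_of_deriv_pos (convex_Icc _ _)
      hf.continuous.continuousOn fun y hy => hincr y (interior_subset hy)).monotoneOn
    exact (hmono ⟨(not_le.1 htl).le, htx.trans h₂.le⟩ ⟨(not_le.1 htl).le.trans htx, h₂.le⟩
      htx).trans hx
  · have htx : x ≤ t * x := by nlinarith
    by_cases htu : u₁ ≤ t * x
    · exact (hmid _ ⟨htu, (mul_nonpos_of_nonneg_of_nonpos ht₀ hx₀).trans hl₂⟩).le
    have hanti : AntitoneOn f (Icc l₁ u₁) := (strictAntiOn_of_deriv_neg (convex_Icc _ _)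
      hf.continuous.continuousOn fun y hy => hdecr y (interior_subset hy)).antitoneOn
    exact (hanti ⟨h₁.le, htx.trans (not_le.1 htu).le⟩ ⟨h₁.le.trans htx, (not_le.1 htu).le⟩
      htx).trans hx

lemma forall_connectedComponentIn_meets_axis_iff_starConvex {f : ℝ → ℝ} (hf : Continuous f) :
    (∀ p ∈ {p : ℝ × ℝ | f p.1 + p.2 ^ 2 = 0},
      ∃ q ∈ connectedComponentIn {p : ℝ × ℝ | f p.1 + p.2 ^ 2 = 0} p, q.1 = 0) ↔
    StarConvex ℝ 0 {x | f x ≤ 0} := by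
  set V := {p : ℝ × ℝ | f p.1 + p.2 ^ 2 = 0}
  rw [starConvex_zero_iff]
  constructor
  · intro h x hx t ht₀ ht₁
    have hp : (x, √(-f x)) ∈ V := by
      simp [V, Real.sq_sqrt (neg_nonneg.2 (show f x ≤ 0 from hx))]
    obtain ⟨q, hq, hq₀⟩ := h _ hp
    -- the projection of the component through `(x, _)` is an interval containing `0` and `x`
    have hord : (Prod.fst '' connectedComponentIn V (x, √(-f x))).OrdConnected :=
      isPreconnected_iff_ordConnected.1
        (isPreconnected_connectedComponentIn.image _ continuous_fst.continuousOn)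
    have htx : t • x ∈ uIcc 0 x := by
      rw [← segment_eq_uIcc]
      exact ⟨1 - t, t, by linarith, ht₀, by ring, by simp⟩
    obtain ⟨r, hr, hrx⟩ :=
      hord.uIcc_subset ⟨q, hq, hq₀⟩ ⟨_, mem_connectedComponentIn hp, rfl⟩ htx
    have hrV : f r.1 + r.2 ^ 2 = 0 := (connectedComponentIn_subset V _ hr : r ∈ V)
    show f (t • x) ≤ 0
    rw [← hrx]; nlinarith [sq_nonneg r.2]
  · intro h p hp
    obtain ⟨s, hs, hsp⟩ : ∃ s : ℝ, s ^ 2 = 1 ∧ s * |p.2| = p.2 := by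
      rcases le_or_gt 0 p.2 with h₀ | h₀
      · exact ⟨1, by norm_num, by simp [abs_of_nonneg h₀]⟩
      · exact ⟨-1, by norm_num, by simp [abs_of_neg h₀]⟩
    have hp₁ : f p.1 ≤ 0 := by nlinarith [sq_nonneg p.2, show f p.1 + p.2 ^ 2 = 0 from hp]
    let γ : ℝ → ℝ × ℝ := fun t => (t * p.1, s * √(-f (t * p.1)))
    have hγ : Continuous γ := by fun_prop
    have hγV : γ '' Icc 0 1 ⊆ V := by
      rintro _ ⟨t, ht, rfl⟩
      have : f (t * p.1) ≤ 0 := h hp₁ ht.1 ht.2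
      simp [V, γ, mul_pow, hs, Real.sq_sqrt (neg_nonneg.2 this)]
    have hγ₁ : γ 1 = p := by
      have : -f p.1 = p.2 ^ 2 := by linarith [show f p.1 + p.2 ^ 2 = 0 from hp]
      simp [γ, this, Real.sqrt_sq_eq_abs, hsp]
    have hsub := (isPreconnected_Icc.image γ hγ.continuousOn).subset_connectedComponentIn
      (hγ₁ ▸ mem_image_of_mem γ (right_mem_Icc.2 zero_le_one)) hγV
    exact ⟨γ 0, hsub (mem_image_of_mem γ (left_mem_Icc.2 zero_le_one)), by simp [γ]⟩

lemma exists_monic_eq_X_sub_C_mul_X_sub_C_mul {K : Type*} [Field K] {p : K[X]} (hp : p.Monic)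
    {a b : K} (hab : a ≠ b) (ha : p.IsRoot a) (hb : p.IsRoot b) :
    ∃ Q : K[X], Q.Monic ∧ p = (X - C a) * (X - C b) * Q := by
  obtain ⟨Q, hQ⟩ := (isCoprime_X_sub_C_of_isUnit_sub (sub_ne_zero.2 hab).isUnit).mul_dvd
    (dvd_iff_isRoot.2 ha) (dvd_iff_isRoot.2 hb)
  exact ⟨Q, ((monic_X_sub_C a).mul (monic_X_sub_C b)).of_mul_monic_left (hQ ▸ hp), hQ⟩

lemma continuous_coeff_mul {W : Type*} [TopologicalSpace W] {p q : W → ℝ[X]}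
    (hp : ∀ i, Continuous fun w => (p w).coeff i) (hq : ∀ i, Continuous fun w => (q w).coeff i)
    (i : ℕ) : Continuous fun w => (p w * q w).coeff i := by
  simp only [coeff_mul]
  exact continuous_finsetSum _ fun j _ => (hp _).mul (hq _)

lemma continuous_coeff_X_sub_C (i : ℕ) : Continuous fun a : ℝ => (X - C a).coeff i := by
  by_cases h : i = 0 <;> simp [coeff_X, coeff_C, h] <;> fun_prop

noncomputable def deformedPolynomial (d : ℕ) (l : Fin d → ℝ) : ℝ[X] :=
  X ^ d + ∑ i : Fin d, C (l i) * X ^ (i : ℕ)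

section DeformedPolynomial

variable {d : ℕ} (l : Fin d → ℝ)

lemma eval_deformedPolynomial (x : ℝ) :
    (deformedPolynomial d l).eval x = deformedPoly d l x := by
  simp [deformedPolynomial, deformedPoly, eval_finsetSum]

lemma degree_sum_C_mul_X_pow_lt :
    (∑ i : Fin d, C (l i) * X ^ (i : ℕ)).degree < (d : WithBot ℕ) := by
  refine (degree_sum_le _ _).trans_lt
    ((Finset.sup_lt_iff (WithBot.bot_lt_coe d)).2 fun i _ => ?_)
  exact (degree_C_mul_X_pow_le _ _).trans_lt (WithBot.coe_lt_coe.2 i.isLt)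

lemma monic_deformedPolynomial : (deformedPolynomial d l).Monic :=
  (monic_X_pow d).add_of_left (by rw [degree_X_pow]; exact degree_sum_C_mul_X_pow_lt l)

lemma natDegree_deformedPolynomial : (deformedPolynomial d l).natDegree = d := by
  rw [deformedPolynomial, natDegree_add_eq_left_of_degree_lt, natDegree_X_pow]
  rw [degree_X_pow]; exact degree_sum_C_mul_X_pow_lt l

lemma coeff_deformedPolynomial (n : ℕ) :
    (deformedPolynomial d l).coeff n =
      (if n = d then 1 else 0) + ∑ i : Fin d, if n = i then l i else 0 := by
  simp [deformedPolynomial, coeff_X_pow]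

lemma coeff_deformedPolynomial_fin (i : Fin d) : (deformedPolynomial d l).coeff i = l i := by
  rw [coeff_deformedPolynomial, if_neg i.isLt.ne, zero_add, Finset.sum_eq_single i]
  · simp
  · intro j _ hj
    rw [if_neg (fun h => hj (Fin.ext h.symm))]
  · simp

lemma deformedPolynomial_coeff_of_monic {p : ℝ[X]} (hp : p.Monic) (hd : p.natDegree = d) :
    deformedPolynomial d (fun i => p.coeff i) = p := by
  conv_rhs => rw [hp.as_sum, hd]
  rw [deformedPolynomial, Fin.sum_univ_eq_sum_range (fun i => C (p.coeff i) * X ^ i)]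

end DeformedPolynomial

section DeformedPoly

variable {d : ℕ}

lemma continuous_coeff_deformedPolynomial (i : ℕ) :
    Continuous fun l : Fin d → ℝ => (deformedPolynomial d l).coeff i := by
  simp only [coeff_deformedPolynomial]
  refine continuous_const.add (continuous_finsetSum _ fun j _ => ?_)
  by_cases h : i = j <;> simp [h] <;> fun_prop

lemma continuous_deformedPoly_uncurry :
    Continuous fun p : (Fin d → ℝ) × ℝ => deformedPoly d p.1 p.2 := by
  unfold deformedPoly; fun_prop

lemma continuous_deformedPoly (l : Fin d → ℝ) : Continuous (deformedPoly d l) :=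
  continuous_deformedPoly_uncurry.comp (Continuous.prodMk_right l)

lemma continuous_deformedPoly_left (x : ℝ) :
    Continuous fun l : Fin d → ℝ => deformedPoly d l x :=
  continuous_deformedPoly_uncurry.comp (Continuous.prodMk_left x)

lemma hasDerivAt_deformedPoly (l : Fin d → ℝ) (x : ℝ) :
    HasDerivAt (deformedPoly d l)
      (d * x ^ (d - 1) + ∑ i, l i * ((i : ℕ) * x ^ ((i : ℕ) - 1))) x :=
  (hasDerivAt_pow d x).add
    (HasDerivAt.fun_sum fun i _ => (hasDerivAt_pow (i : ℕ) x).const_mul (l i))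

lemma differentiable_deformedPoly (l : Fin d → ℝ) : Differentiable ℝ (deformedPoly d l) :=
  fun x => (hasDerivAt_deformedPoly l x).differentiableAt

lemma continuous_deriv_deformedPoly_uncurry :
    Continuous fun p : (Fin d → ℝ) × ℝ => deriv (deformedPoly d p.1) p.2 := by
  simp only [fun p : (Fin d → ℝ) × ℝ => (hasDerivAt_deformedPoly p.1 p.2).deriv]
  fun_prop

lemma continuous_deriv_deformedPoly (l : Fin d → ℝ) : Continuous (deriv (deformedPoly d l)) :=
  continuous_deriv_deformedPoly_uncurry.comp (Continuous.prodMk_right l)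

lemma deformedPoly_convex_comb (l m : Fin d → ℝ) {a b : ℝ} (hab : a + b = 1) (x : ℝ) :
    deformedPoly d (a • l + b • m) x = a * deformedPoly d l x + b * deformedPoly d m x := by
  simp only [deformedPoly, Pi.add_apply, Pi.smul_apply, smul_eq_mul, add_mul,
    Finset.sum_add_distrib, mul_add, Finset.mul_sum, mul_assoc]
  linear_combination (-(x ^ d)) * hab

lemma deformedPoly_pos_of_le_abs (he : Even d) (hd : d ≠ 0) (l : Fin d → ℝ) {x : ℝ}
    (hx : ∑ i, |l i| + 1 ≤ |x|) : 0 < deformedPoly d l x := by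
  have hx1 : 1 ≤ |x| := le_trans (by simp [Finset.sum_nonneg]) hx
  have hsum : |∑ i, l i * x ^ (i : ℕ)| ≤ (∑ i, |l i|) * |x| ^ (d - 1) := by
    calc |∑ i, l i * x ^ (i : ℕ)| ≤ ∑ i, |l i| * |x| ^ (i : ℕ) := by
          simpa [abs_mul, abs_pow] using
            Finset.abs_sum_le_sum_abs (fun i => l i * x ^ (i : ℕ)) _
      _ ≤ ∑ i, |l i| * |x| ^ (d - 1) := by
          gcongr with i; exact Nat.le_sub_one_of_lt i.isLt
      _ = (∑ i, |l i|) * |x| ^ (d - 1) := (Finset.sum_mul _ _ _).symm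
  have hpow : (∑ i, |l i|) * |x| ^ (d - 1) < x ^ d := by
    rw [← he.pow_abs, ← pow_sub_one_mul hd, mul_comm]
    exact mul_lt_mul_of_pos_left (by linarith) (by positivity)
  unfold deformedPoly
  linarith [neg_abs_le (∑ i, l i * x ^ (i : ℕ))]

lemma eventually_forall_deformedPoly_pos_of_le_abs (he : Even d) (hd : d ≠ 0)
    (l₀ : Fin d → ℝ) :
    ∀ᶠ l in 𝓝 l₀, ∀ x, ∑ i, |l₀ i| + 2 ≤ |x| → 0 < deformedPoly d l x := by
  have hcont : Continuous fun l : Fin d → ℝ => ∑ i, |l i| := by fun_prop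
  filter_upwards [hcont.continuousAt.eventually_lt continuousAt_const (lt_add_one (∑ i, |l₀ i|))]
    with l hl x hx
  exact deformedPoly_pos_of_le_abs he hd l (by linarith)

lemma frequently_deformedPoly_neg_of_root {l : Fin d → ℝ} (hl : l ∉ realDiscrB d) {x : ℝ}
    (hx : deformedPoly d l x = 0) : ∃ᶠ y in 𝓝 x, deformedPoly d l y < 0 := by
  by_contra h
  refine hl (Or.inr ⟨x, hx, IsLocalMin.deriv_eq_zero ?_⟩)
  filter_upwards [not_frequently.1 h] with y hy
  rw [hx]; exact not_lt.1 hy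

lemma frequently_deformedPoly_pos_of_root {l : Fin d → ℝ} (hl : l ∉ realDiscrB d) {x : ℝ}
    (hx : deformedPoly d l x = 0) : ∃ᶠ y in 𝓝 x, 0 < deformedPoly d l y := by
  by_contra h
  refine hl (Or.inr ⟨x, hx, IsLocalMax.deriv_eq_zero ?_⟩)
  filter_upwards [not_frequently.1 h] with y hy
  rw [hx]; exact not_lt.1 hy

end DeformedPoly

section Loci

variable {d : ℕ}

def positiveLocus (d : ℕ) : Set (Fin d → ℝ) := {l | ∀ x, 0 < deformedPoly d l x}

-- By `twoRootLocus_eq_image_factoredCoeffs`, these are the parameters for which `P` has exactly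
-- two real roots, both simple, one on each side of `0`.
def twoRootLocus (d : ℕ) : Set (Fin d → ℝ) :=
  {l | l ∉ realDiscrB d ∧ deformedPoly d l 0 < 0 ∧ StarConvex ℝ 0 {x | deformedPoly d l x ≤ 0}}

lemma convex_positiveLocus : Convex ℝ (positiveLocus d) := by
  intro l hl m hm a b ha hb hab x
  rw [deformedPoly_convex_comb l m hab]
  rcases ha.eq_or_lt with rfl | ha
  · simpa [show b = 1 by linarith] using hm x
  · exact add_pos_of_pos_of_nonneg (mul_pos ha (hl x)) (mul_nonneg hb (hm x).le)

lemma isOpen_positiveLocus (he : Even d) (hd : d ≠ 0) : IsOpen (positiveLocus d) := by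
  refine isOpen_iff_mem_nhds.2 fun l₀ hl₀ => ?_
  filter_upwards [eventually_forall_deformedPoly_pos_of_le_abs he hd l₀,
    eventually_forall_mem_of_isCompact continuous_deformedPoly_uncurry isCompact_Icc isOpen_Ioi
      fun x (_ : x ∈ Icc (-(∑ i, |l₀ i| + 2)) (∑ i, |l₀ i| + 2)) => hl₀ x] with l hfar hnear x
  by_cases hx : ∑ i, |l₀ i| + 2 ≤ |x|
  exacts [hfar x hx, hnear x (abs_le.1 (not_le.1 hx).le)]

lemma positiveLocus_nonempty (he : Even d) : (positiveLocus d).Nonempty := by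
  refine ⟨fun i => if (i : ℕ) = 0 then 1 else 0, fun x => ?_⟩
  cases d with
  | zero => simp [deformedPoly]
  | succ m =>
    simpa [deformedPoly] using add_pos_of_nonneg_of_pos (he.pow_nonneg x) one_pos

lemma positiveLocus_subset_compl_realDiscrB : positiveLocus d ⊆ (realDiscrB d)ᶜ := by
  rintro l hl (h₀ | ⟨x, hx, -⟩)
  exacts [(hl 0).ne' h₀, (hl x).ne' hx]

lemma starConvex_iff_mem_positiveLocus_or_mem_twoRootLocus {l : Fin d → ℝ}
    (hl : l ∉ realDiscrB d) :
    StarConvex ℝ 0 {x | deformedPoly d l x ≤ 0} ↔ l ∈ positiveLocus d ∨ l ∈ twoRootLocus d := by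
  refine ⟨fun h => ?_, ?_⟩
  · rcases (Ne.lt_or_gt fun h₀ => hl (Or.inl h₀)) with h₀ | h₀
    · exact Or.inr ⟨hl, h₀, h⟩
    · refine Or.inl fun x => not_le.1 fun hx => h₀.not_ge (h.mem ⟨x, hx⟩)
  · rintro (h | ⟨-, -, h⟩)
    · convert starConvex_empty (𝕜 := ℝ) (0 : ℝ)
      exact eq_empty_of_forall_notMem fun x hx => (h x).not_ge hx
    · exact h

lemma notMem_positiveLocus_iff {l : Fin d → ℝ} (hl : l ∉ realDiscrB d) :
    l ∉ positiveLocus d ↔ ∃ x, deformedPoly d l x < 0 := by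
  change (¬ ∀ x, 0 < deformedPoly d l x) ↔ _
  push Not
  refine ⟨fun ⟨x, hx⟩ => ?_, fun ⟨x, hx⟩ => ⟨x, hx.le⟩⟩
  rcases hx.lt_or_eq with hx | hx
  exacts [⟨x, hx⟩, (frequently_deformedPoly_neg_of_root hl hx).exists]

lemma notMem_twoRootLocus_iff {l : Fin d → ℝ} (hl : l ∉ realDiscrB d) :
    l ∉ twoRootLocus d ↔ 0 < deformedPoly d l 0 ∨
      ∃ x, ∃ t ∈ Icc (0 : ℝ) 1, deformedPoly d l x < 0 ∧ 0 < deformedPoly d l (t * x) := by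
  refine ⟨fun h => ?_, ?_⟩
  · rcases (Ne.lt_or_gt fun h₀ => hl (Or.inl h₀)) with h₀ | h₀
    · right
      have hstar : ¬ StarConvex ℝ 0 {x | deformedPoly d l x ≤ 0} := fun hs => h ⟨hl, h₀, hs⟩
      rw [starConvex_zero_iff] at hstar
      push Not at hstar
      obtain ⟨x, hx, t, ht₀, ht₁, hpos⟩ := hstar
      replace hpos : 0 < deformedPoly d l (t * x) := not_le.1 hpos
      rcases (show deformedPoly d l x ≤ 0 from hx).lt_or_eq with hx | hx
      · exact ⟨x, t, ⟨ht₀, ht₁⟩, hx, hpos⟩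
      -- `x` is a simple root, so it is a limit of points `y` with `P y < 0 < P (t y)`
      have hcont : Continuous fun y => deformedPoly d l (t * y) :=
        (continuous_deformedPoly l).comp (continuous_const_mul t)
      obtain ⟨y, hy, hty⟩ := ((frequently_deformedPoly_neg_of_root hl hx).and_eventually
        (continuousAt_const.eventually_lt hcont.continuousAt hpos)).exists
      exact ⟨y, t, ⟨ht₀, ht₁⟩, hy, hty⟩
    · exact Or.inl h₀
  · rintro (h | ⟨x, t, ht, hx, hpos⟩) ⟨-, h₀, hstar⟩
    · exact h.not_gt h₀
    · exact hpos.not_ge ((starConvex_zero_iff.1 hstar) hx.le ht.1 ht.2)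

lemma isOpen_setOf_exists_deformedPoly_neg :
    IsOpen {l : Fin d → ℝ | ∃ x, deformedPoly d l x < 0} := by
  refine isOpen_iff_mem_nhds.2 fun l ⟨x, hx⟩ => ?_
  filter_upwards
    [(continuous_deformedPoly_left x).continuousAt.eventually_lt continuousAt_const hx]
    with m hm using ⟨x, hm⟩

lemma isOpen_setOf_exists_deformedPoly_neg_pos :
    IsOpen {l : Fin d → ℝ |
      ∃ x, ∃ t ∈ Icc (0 : ℝ) 1, deformedPoly d l x < 0 ∧ 0 < deformedPoly d l (t * x)} := by
  refine isOpen_iff_mem_nhds.2 fun l ⟨x, t, ht, hx, hpos⟩ => ?_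
  filter_upwards
    [(continuous_deformedPoly_left x).continuousAt.eventually_lt continuousAt_const hx,
    continuousAt_const.eventually_lt (continuous_deformedPoly_left (t * x)).continuousAt hpos]
    with m hmx hmpos using ⟨x, t, ht, hmx, hmpos⟩

lemma exists_roots_of_mem_twoRootLocus (he : Even d) (hd : d ≠ 0) {l : Fin d → ℝ}
    (hl : l ∈ twoRootLocus d) :
    ∃ a b, a < 0 ∧ 0 < b ∧ deformedPoly d l a = 0 ∧ deformedPoly d l b = 0 ∧
      (∀ x, x < a ∨ b < x → 0 < deformedPoly d l x) ∧ ∀ x ∈ Ioo a b, deformedPoly d l x < 0 := by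
  obtain ⟨hD, h₀, hstar⟩ := hl
  have hcont := continuous_deformedPoly l
  set A := {x | deformedPoly d l x ≤ 0}
  have hA0 : (0 : ℝ) ∈ A := h₀.le
  have hA : IsCompact A :=
    (isCompact_Icc (a := -(∑ i, |l i| + 1)) (b := ∑ i, |l i| + 1)).of_isClosed_subset
    (isClosed_le hcont continuous_const) fun x hx =>
      abs_le.1 (not_lt.1 fun h => (deformedPoly_pos_of_le_abs he hd l h.le).not_ge hx)
  obtain ⟨a, haA, hamin⟩ := hA.exists_isLeast ⟨0, hA0⟩
  obtain ⟨b, hbA, hbmax⟩ := hA.exists_isGreatest ⟨0, hA0⟩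
  have hout : ∀ x, x < a ∨ b < x → 0 < deformedPoly d l x := fun x hx => not_le.1 fun h =>
    hx.elim (fun h' => (hamin h).not_gt h') fun h' => (hbmax h).not_gt h'
  have hIcc : Icc a b ⊆ A := (isPreconnected_iff_ordConnected.1
    (hstar.isPathConnected hA0).isConnected.isPreconnected).out haA hbA
  have hPa : deformedPoly d l a = 0 := le_antisymm haA <| not_lt.1 fun h =>
    let ⟨x, hx, hPx⟩ := (hcont.continuousAt.eventually_lt continuousAt_const h).exists_lt
    (hout x (Or.inl hx)).not_gt hPx
  have hPb : deformedPoly d l b = 0 := le_antisymm hbA <| not_lt.1 fun h =>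
    let ⟨x, hx, hPx⟩ := (hcont.continuousAt.eventually_lt continuousAt_const h).exists_gt
    (hout x (Or.inr hx)).not_gt hPx
  refine ⟨a, b, (hamin hA0).lt_of_ne fun h => h₀.ne (h ▸ hPa),
    (hbmax hA0).lt_of_ne' fun h => h₀.ne (h ▸ hPb), hPa, hPb, hout, fun x hx => ?_⟩
  refine (hIcc (Ioo_subset_Icc_self hx)).lt_of_ne fun hPx => ?_
  obtain ⟨y, hy, hyab⟩ := ((frequently_deformedPoly_pos_of_root hD hPx).and_eventually
    (Ioo_mem_nhds hx.1 hx.2)).exists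
  exact hy.not_ge (hIcc (Ioo_subset_Icc_self hyab))

end Loci

section FactoredCoeffs

variable {n : ℕ}

noncomputable def factoredCoeffs (n : ℕ) (w : ℝ × ℝ × (Fin n → ℝ)) : Fin (n + 2) → ℝ :=
  fun i => ((X - C w.1) * (X - C w.2.1) * deformedPolynomial n w.2.2).coeff i

lemma deformedPolynomial_factoredCoeffs (a b : ℝ) (q : Fin n → ℝ) :
    deformedPolynomial (n + 2) (factoredCoeffs n (a, b, q)) =
      (X - C a) * (X - C b) * deformedPolynomial n q := by
  have hab : ((X - C a) * (X - C b)).Monic := (monic_X_sub_C a).mul (monic_X_sub_C b)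
  refine deformedPolynomial_coeff_of_monic (hab.mul (monic_deformedPolynomial q)) ?_
  rw [hab.natDegree_mul (monic_deformedPolynomial q), (monic_X_sub_C a).natDegree_mul
    (monic_X_sub_C b), natDegree_X_sub_C, natDegree_X_sub_C, natDegree_deformedPolynomial]
  ring

lemma deformedPoly_factoredCoeffs (a b : ℝ) (q : Fin n → ℝ) (x : ℝ) :
    deformedPoly (n + 2) (factoredCoeffs n (a, b, q)) x =
      (x - a) * (x - b) * deformedPoly n q x := by
  rw [← eval_deformedPolynomial, deformedPolynomial_factoredCoeffs]
  simp [eval_deformedPolynomial]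

lemma continuous_factoredCoeffs : Continuous (factoredCoeffs n) :=
  continuous_pi fun i => continuous_coeff_mul
    (continuous_coeff_mul (fun j => (continuous_coeff_X_sub_C j).comp continuous_fst)
      (fun j => (continuous_coeff_X_sub_C j).comp (continuous_fst.comp continuous_snd)))
    (fun j => (continuous_coeff_deformedPolynomial j).comp
      (continuous_snd.comp continuous_snd)) i

lemma deriv_deformedPoly_factoredCoeffs_left (a b : ℝ) (q : Fin n → ℝ) :
    deriv (deformedPoly (n + 2) (factoredCoeffs n (a, b, q))) a =
      (a - b) * deformedPoly n q a := by
  have h : deformedPoly (n + 2) (factoredCoeffs n (a, b, q)) =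
      fun x => (x - a) * ((x - b) * deformedPoly n q x) := by
    ext x; rw [deformedPoly_factoredCoeffs, mul_assoc]
  rw [h]
  exact deriv_sub_mul_self (f := fun x => (x - b) * deformedPoly n q x)
    ((differentiableAt_id.sub_const b).mul (differentiable_deformedPoly q a))

lemma deriv_deformedPoly_factoredCoeffs_right (a b : ℝ) (q : Fin n → ℝ) :
    deriv (deformedPoly (n + 2) (factoredCoeffs n (a, b, q))) b =
      (b - a) * deformedPoly n q b := by
  have h : deformedPoly (n + 2) (factoredCoeffs n (a, b, q)) =
      fun x => (x - b) * ((x - a) * deformedPoly n q x) := by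
    ext x; rw [deformedPoly_factoredCoeffs]; ring
  rw [h]
  exact deriv_sub_mul_self (f := fun x => (x - a) * deformedPoly n q x)
    ((differentiableAt_id.sub_const a).mul (differentiable_deformedPoly q b))

lemma eventually_mem_twoRootLocus (hn : Even n) {a b : ℝ} (ha : a < 0) (hb : 0 < b)
    {q : Fin n → ℝ} (hq : q ∈ positiveLocus n) :
    ∀ᶠ l in 𝓝 (factoredCoeffs n (a, b, q)), l ∈ twoRootLocus (n + 2) := by
  set l₀ := factoredCoeffs n (a, b, q)
  have hP₀ := deformedPoly_factoredCoeffs a b q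
  have hout : ∀ x, x < a ∨ b < x → 0 < deformedPoly (n + 2) l₀ x := by
    rintro x (hx | hx) <;> rw [hP₀] <;> exact mul_pos (by nlinarith) (hq x)
  have hin : ∀ x ∈ Ioo a b, deformedPoly (n + 2) l₀ x < 0 := fun x hx => by
    rw [hP₀]; exact mul_neg_of_neg_of_pos (by nlinarith [hx.1, hx.2]) (hq x)
  have hda : deriv (deformedPoly (n + 2) l₀) a < 0 := by
    rw [deriv_deformedPoly_factoredCoeffs_left]
    exact mul_neg_of_neg_of_pos (by linarith) (hq a)
  have hdb : 0 < deriv (deformedPoly (n + 2) l₀) b := by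
    rw [deriv_deformedPoly_factoredCoeffs_right]; exact mul_pos (by linarith) (hq b)
  have hcont := continuous_deriv_deformedPoly l₀
  obtain ⟨ε₁, hε₁, h₁⟩ := Metric.nhds_basis_closedBall.mem_iff.1
    (inter_mem (hcont.continuousAt.eventually_lt continuousAt_const hda) (Iio_mem_nhds ha))
  obtain ⟨ε₂, hε₂, h₂⟩ := Metric.nhds_basis_closedBall.mem_iff.1
    (inter_mem (continuousAt_const.eventually_lt hcont.continuousAt hdb) (Ioi_mem_nhds hb))
  rw [Real.closedBall_eq_Icc] at h₁ h₂
  have hu₁ : a + ε₁ < 0 := (h₁ (right_mem_Icc.2 (by linarith))).2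
  have hl₂ : 0 < b - ε₂ := (h₂ (left_mem_Icc.2 (by linarith))).2
  set R := ∑ i, |l₀ i| + 2
  have hP := continuous_deformedPoly_uncurry (d := n + 2)
  have hP' := continuous_deriv_deformedPoly_uncurry (d := n + 2)
  filter_upwards [eventually_forall_deformedPoly_pos_of_le_abs (hn.add even_two) (by omega) l₀,
    eventually_forall_mem_of_isCompact hP isCompact_Icc isOpen_Ioi
      fun x (hx : x ∈ Icc (-R) (a - ε₁)) => hout x (Or.inl (by linarith [hx.2])),
    eventually_forall_mem_of_isCompact hP isCompact_Icc isOpen_Ioi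
      fun x (hx : x ∈ Icc (b + ε₂) R) => hout x (Or.inr (by linarith [hx.1])),
    eventually_forall_mem_of_isCompact hP isCompact_Icc isOpen_Iio
      fun x (hx : x ∈ Icc (a + ε₁) (b - ε₂)) => hin x ⟨by linarith [hx.1], by linarith [hx.2]⟩,
    eventually_forall_mem_of_isCompact hP' isCompact_Icc isOpen_Iio fun x hx => (h₁ hx).1,
    eventually_forall_mem_of_isCompact hP' isCompact_Icc isOpen_Ioi fun x hx => (h₂ hx).1]
    with l hfar hleft hright hmid hdecr hincr
  obtain ⟨hroots, hstar⟩ := deriv_ne_zero_and_starConvex_of_sign_pattern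
    (differentiable_deformedPoly l) hu₁.le hl₂.le
    (fun x hx => if h : R ≤ |x| then hfar x h else hleft x ⟨(abs_lt.1 (not_le.1 h)).1.le, hx⟩)
    (fun x hx => if h : R ≤ |x| then hfar x h else hright x ⟨hx, (abs_lt.1 (not_le.1 h)).2.le⟩)
    hmid hdecr hincr
  have h₀ : deformedPoly (n + 2) l 0 < 0 := hmid 0 ⟨hu₁.le, hl₂.le⟩
  refine ⟨?_, h₀, hstar⟩
  rintro (h | ⟨x, hx, hx'⟩)
  exacts [h₀.ne h, hroots x hx hx']

lemma mem_positiveLocus_of_factoredCoeffs {a b : ℝ} (hab : a < b) {q : Fin n → ℝ}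
    (hD : factoredCoeffs n (a, b, q) ∉ realDiscrB (n + 2))
    (hroots : ∀ x, deformedPoly (n + 2) (factoredCoeffs n (a, b, q)) x = 0 → x = a ∨ x = b)
    (hpos : 0 < deformedPoly (n + 2) (factoredCoeffs n (a, b, q)) (b + 1)) :
    q ∈ positiveLocus n := by
  have hne : ∀ x, deformedPoly n q x ≠ 0 := by
    intro x hx
    have hroot : deformedPoly (n + 2) (factoredCoeffs n (a, b, q)) x = 0 := by
      rw [deformedPoly_factoredCoeffs, hx, mul_zero]
    rcases hroots x hroot with rfl | rfl
    · exact hD (Or.inr ⟨x, hroot, by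
        rw [deriv_deformedPoly_factoredCoeffs_left, hx, mul_zero]⟩)
    · exact hD (Or.inr ⟨x, hroot, by
        rw [deriv_deformedPoly_factoredCoeffs_right, hx, mul_zero]⟩)
  rw [deformedPoly_factoredCoeffs, add_sub_cancel_left, mul_one] at hpos
  have h₁ : 0 < deformedPoly n q (b + 1) := pos_of_mul_pos_right hpos (by linarith)
  exact fun x => not_le.1 fun hx =>
    let ⟨y, hy⟩ := intermediate_value_univ x (b + 1) (continuous_deformedPoly q) ⟨hx, h₁.le⟩
    hne y hy

lemma twoRootLocus_eq_image_factoredCoeffs (hn : Even n) :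
    twoRootLocus (n + 2) = factoredCoeffs n '' (Iio 0 ×ˢ Ioi 0 ×ˢ positiveLocus n) := by
  ext l
  refine ⟨fun hl => ?_, ?_⟩
  · obtain ⟨a, b, ha, hb, hPa, hPb, hout, hin⟩ :=
      exists_roots_of_mem_twoRootLocus (hn.add even_two) (by omega) hl
    obtain ⟨Q, hQ, hpQ⟩ := exists_monic_eq_X_sub_C_mul_X_sub_C_mul (monic_deformedPolynomial l)
      (ha.trans hb).ne (by rw [IsRoot, eval_deformedPolynomial, hPa])
      (by rw [IsRoot, eval_deformedPolynomial, hPb])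
    have hQdeg : Q.natDegree = n := by
      have h := natDegree_deformedPolynomial l
      rw [hpQ, ((monic_X_sub_C a).mul (monic_X_sub_C b)).natDegree_mul hQ,
        (monic_X_sub_C a).natDegree_mul (monic_X_sub_C b), natDegree_X_sub_C,
        natDegree_X_sub_C] at h
      omega
    have hfac : factoredCoeffs n (a, b, fun i => Q.coeff i) = l := funext fun i => by
      rw [factoredCoeffs, deformedPolynomial_coeff_of_monic hQ hQdeg, ← hpQ,
        coeff_deformedPolynomial_fin]
    subst hfac
    refine ⟨(a, b, fun i => Q.coeff i), ⟨ha, hb, mem_positiveLocus_of_factoredCoeffs (ha.trans hb)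
      hl.1 (fun x hx => ?_) (hout _ (Or.inr (by linarith)))⟩, rfl⟩
    rcases lt_trichotomy x a with hxa | rfl | hxa
    · exact absurd hx (hout x (Or.inl hxa)).ne'
    · exact Or.inl rfl
    rcases lt_trichotomy x b with hxb | rfl | hxb
    · exact absurd hx (hin x ⟨hxa, hxb⟩).ne
    · exact Or.inr rfl
    · exact absurd hx (hout x (Or.inr hxb)).ne'
  · rintro ⟨⟨a, b, q⟩, ⟨ha, hb, hq⟩, rfl⟩
    exact (eventually_mem_twoRootLocus hn ha hb hq).self_of_nhds

lemma isOpen_twoRootLocus (hn : Even n) : IsOpen (twoRootLocus (n + 2)) := by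
  refine isOpen_iff_mem_nhds.2 fun l hl => ?_
  rw [twoRootLocus_eq_image_factoredCoeffs hn] at hl
  obtain ⟨⟨a, b, q⟩, ⟨ha, hb, hq⟩, rfl⟩ := hl
  exact eventually_mem_twoRootLocus hn ha hb hq

lemma isPreconnected_twoRootLocus (hn : Even n) : IsPreconnected (twoRootLocus (n + 2)) := by
  rw [twoRootLocus_eq_image_factoredCoeffs hn]
  exact ((convex_Iio 0).prod ((convex_Ioi 0).prod convex_positiveLocus)).isPreconnected.image _
    continuous_factoredCoeffs.continuousOn

lemma twoRootLocus_nonempty (hn : Even n) : (twoRootLocus (n + 2)).Nonempty := by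
  obtain ⟨q, hq⟩ := positiveLocus_nonempty hn
  rw [twoRootLocus_eq_image_factoredCoeffs hn]
  exact ⟨_, mem_image_of_mem _ (mk_mem_prod (neg_one_lt_zero (R := ℝ))
    (mk_mem_prod (zero_lt_one' ℝ) hq))⟩

end FactoredCoeffs

theorem card_isLacuna {d : ℕ} (he : Even d) (hd : d ≠ 0) :
    Nat.card {Γ : ConnectedComponents ↥((realDiscrB d)ᶜ) //
      IsLacuna d (levelSetBplus d) Γ} = 2 := by
  obtain ⟨n, rfl⟩ : ∃ n, d = n + 2 := by obtain ⟨k, rfl⟩ := he; exact ⟨k + k - 2, by omega⟩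
  have hn : Even n := by simpa [Nat.even_add] using he
  have hlac : ∀ Γ, IsLacuna (n + 2) (levelSetBplus (n + 2)) Γ ↔
      ∀ l, ConnectedComponents.mk l = Γ →
        l ∈ ((↑) ⁻¹' positiveLocus (n + 2) ∪ (↑) ⁻¹' twoRootLocus (n + 2) :
          Set ↥((realDiscrB (n + 2))ᶜ)) := fun Γ =>
    forall₂_congr fun l _ => (or_iff_right_of_imp fun h => by simp [h]).trans
      ((forall_connectedComponentIn_meets_axis_iff_starConvex (continuous_deformedPoly l.1)).trans
        (starConvex_iff_mem_positiveLocus_or_mem_twoRootLocus l.2))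
  rw [Nat.card_congr (Equiv.subtypeEquivRight hlac)]
  obtain ⟨s, hs⟩ := positiveLocus_nonempty he
  obtain ⟨t, ht⟩ := twoRootLocus_nonempty hn
  exact card_connectedComponents_subset_union_eq_two
    (isClopen_preimage_val_of_isOpen (isOpen_positiveLocus he hd)
      isOpen_setOf_exists_deformedPoly_neg fun l hl => notMem_positiveLocus_iff hl)
    (isClopen_preimage_val_of_isOpen (isOpen_twoRootLocus hn)
      ((isOpen_lt continuous_const (continuous_deformedPoly_left 0)).union
        isOpen_setOf_exists_deformedPoly_neg_pos) fun l hl => notMem_twoRootLocus_iff hl)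
    (convex_positiveLocus.isPreconnected.preimage_val positiveLocus_subset_compl_realDiscrB)
    ((isPreconnected_twoRootLocus hn).preimage_val fun l hl => hl.1)
    (a := ⟨s, positiveLocus_subset_compl_realDiscrB hs⟩) hs (b := ⟨t, ht.1⟩) ht
    (disjoint_left.2 fun l hS hT => (hS 0).not_gt hT.2.1)

/-- Exactly `2` connected components of the complement of the real discriminant of
`B_{2k}⁺` are lacunas. -/
theorem stmt11 (k : ℕ) (hk : 1 ≤ k) :
    Nat.card {Γ : ConnectedComponents ↥((realDiscrB (2 * k))ᶜ) //
      IsLacuna (2 * k) (levelSetBplus (2 * k)) Γ} = 2 :=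
  card_isLacuna (even_two_mul k) (by omega)
end

section
/- Let k ≥ 1. For λ = (λ₀,…,λ_{2k−1}) ∈ ℝ^{2k} set P_λ(x) = x^{2k} + λ_{2k−1}x^{2k−1} + ⋯ + λ₁x + λ₀, let Σ_ℝ = {λ ∈ ℝ^{2k} : P_λ(0) = 0, or there exists x ∈ ℝ with P_λ(x) = 0 and P_λ′(x) = 0}, and for λ ∉ Σ_ℝ let V_λ = {(x,y) ∈ ℝ² : P_λ(x) − y² = 0}. Call a connected component Γ of ℝ^{2k} ∖ Σ_ℝ a lacuna if for every λ ∈ Γ either V_λ is empty or every connected component of V_λ intersects the line {x = 0}. Then exactly 1 connected component of ℝ^{2k} ∖ Σ_ℝ is a lacuna. -/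
/-- The real zero level set `V_λ = {(x,y) ∈ ℝ² : P_λ(x) − y² = 0}` of the `B_d⁻` morsification. -/
def levelSetBminus (d : ℕ) (l : Fin d → ℝ) : Set (ℝ × ℝ) :=
  {p | deformedPoly d l p.1 - p.2 ^ 2 = 0}

lemma contX (d : ℕ) (l : Fin d → ℝ) : Continuous (deformedPoly d l) := by
  unfold deformedPoly
  exact (continuous_pow d).add (continuous_finset_sum _ fun i _ =>
    (continuous_const.mul (continuous_pow _)))

lemma contL (d : ℕ) (x : ℝ) : Continuous (fun l : Fin d → ℝ => deformedPoly d l x) := by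
  unfold deformedPoly
  exact continuous_const.add (continuous_finset_sum _ fun i _ =>
    ((continuous_apply i).mul continuous_const))

lemma diffX (d : ℕ) (l : Fin d → ℝ) : Differentiable ℝ (deformedPoly d l) := by
  unfold deformedPoly
  exact (differentiable_pow d).add (Differentiable.fun_sum fun i _ =>
    (differentiable_const _).mul (differentiable_pow _))

lemma bound (d : ℕ) (hd : 1 ≤ d) (l l' : Fin d → ℝ) (x : ℝ) :
    |deformedPoly d l' x - deformedPoly d l x| ≤ (∑ i, |l' i - l i|) * max 1 |x| ^ (d - 1) := by
  have h1 : deformedPoly d l' x - deformedPoly d l x = ∑ i, (l' i - l i) * x ^ (i : ℕ) := by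
    unfold deformedPoly
    rw [show ∑ i, (l' i - l i) * x ^ (i : ℕ)
        = (∑ i, l' i * x ^ (i : ℕ)) - ∑ i, l i * x ^ (i : ℕ) from by
      rw [← Finset.sum_sub_distrib]; congr 1; ext i; ring]
    ring
  rw [h1, Finset.sum_mul]
  refine (Finset.abs_sum_le_sum_abs _ _).trans (Finset.sum_le_sum fun i _ => ?_)
  rw [abs_mul, abs_pow]
  refine mul_le_mul_of_nonneg_left ?_ (abs_nonneg _)
  have hi := i.isLt
  calc |x| ^ (i : ℕ) ≤ max 1 |x| ^ (i : ℕ) := pow_le_pow_left₀ (abs_nonneg _) (le_max_right _ _) _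
    _ ≤ max 1 |x| ^ (d - 1) := pow_le_pow_right₀ (le_max_left _ _) (by omega)

lemma growth (d : ℕ) (hd : Even d) (hd1 : 1 ≤ d) (l : Fin d → ℝ) (x : ℝ) (hx : 1 ≤ |x|)
    (hs : ∑ i, |l i| < |x|) : 0 < deformedPoly d l x := by
  have h1 : |∑ i, l i * x ^ (i : ℕ)| ≤ (∑ i, |l i|) * |x| ^ (d - 1) := by
    rw [Finset.sum_mul]
    refine (Finset.abs_sum_le_sum_abs _ _).trans (Finset.sum_le_sum fun i _ => ?_)
    rw [abs_mul, abs_pow]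
    have hi := i.isLt
    exact mul_le_mul_of_nonneg_left (pow_le_pow_right₀ hx (by omega)) (abs_nonneg _)
  have h2 : x ^ d = |x| ^ d := by rw [← abs_pow, abs_of_nonneg (hd.pow_nonneg x)]
  have h3 : (∑ i, |l i|) * |x| ^ (d - 1) < |x| * |x| ^ (d - 1) :=
    mul_lt_mul_of_pos_right hs (pow_pos (by linarith) _)
  have h4 : |x| * |x| ^ (d - 1) = |x| ^ d := by
    rw [← pow_succ']; congr 1; omega
  unfold deformedPoly
  nlinarith [neg_abs_le (∑ i, l i * x ^ (i : ℕ))]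

lemma growth' (d : ℕ) (hd : Even d) (hd1 : 1 ≤ d) (l : Fin d → ℝ) :
    ∃ R : ℝ, 1 ≤ R ∧ ∀ x : ℝ, R ≤ |x| → 0 < deformedPoly d l x := by
  refine ⟨max 1 (∑ i, |l i| + 1), le_max_left _ _, fun x hx => ?_⟩
  exact growth d hd hd1 l x ((le_max_left _ _).trans hx)
    (by have := (le_max_right 1 (∑ i, |l i| + 1)).trans hx; linarith)

/-- openness of the everywhere-positive set -/
lemma openA (d : ℕ) (hd : Even d) (hd1 : 1 ≤ d) :
    IsOpen {l : Fin d → ℝ | ∀ x, 0 < deformedPoly d l x} := by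
  rw [isOpen_iff_mem_nhds]
  intro l hl
  -- radius control
  set S : ℝ := ∑ i, |l i| with hS
  set R : ℝ := max 1 (S + 1) with hR
  have hR1 : (1:ℝ) ≤ R := le_max_left _ _
  -- min on compact
  obtain ⟨x₀, hx₀, hmin⟩ := (isCompact_Icc (a := -R) (b := R)).exists_isMinOn
    (Set.nonempty_Icc.2 (by linarith)) (contX d l).continuousOn
  set m : ℝ := deformedPoly d l x₀ with hm
  have hm0 : 0 < m := hl x₀
  set ε : ℝ := min (1 / (d + 1)) (m / (d * R ^ (d - 1) + 1)) with hε
  have hεpos : 0 < ε := by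
    refine lt_min (by positivity) (by positivity)
  -- neighborhood: sup-dist balls
  have hcont : Continuous (fun l' : Fin d → ℝ => ∑ i, |l' i - l i|) := by
    exact continuous_finset_sum _ fun i _ => ((continuous_apply i).sub continuous_const).abs
  have hopen : IsOpen {l' : Fin d → ℝ | ∑ i, |l' i - l i| < d * ε} :=
    isOpen_lt hcont continuous_const
  refine Filter.mem_of_superset (hopen.mem_nhds (by simp [abs_nonneg]; positivity)) ?_
  intro l' hl'
  simp only [Set.mem_setOf_eq] at hl' ⊢
  intro x
  rcases le_or_gt R |x| with hxR | hxR
  · -- far region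
    refine growth d hd hd1 l' x (hR1.trans hxR) ?_
    have h1 : ∑ i, |l' i| ≤ S + ∑ i, |l' i - l i| := by
      rw [← Finset.sum_add_distrib]
      refine Finset.sum_le_sum fun i _ => ?_
      have := abs_sub_abs_le_abs_sub (l' i) (l i)
      linarith [abs_sub_abs_le_abs_sub (l' i) (l i)]
    have h2 : d * ε ≤ 1 := by
      have : ε ≤ 1 / (d+1) := min_le_left _ _
      have hd0 : (0:ℝ) < d + 1 := by positivity
      rw [le_div_iff₀ hd0] at this
      nlinarith [hεpos.le]
    have : S + 1 ≤ R := le_max_right _ _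
    linarith
  · -- compact region
    have hmem : x ∈ Set.Icc (-R) R := by
      constructor <;> [linarith [neg_abs_le x]; linarith [le_abs_self x]]
    have h1 := hmin hmem
    have h2 := bound d hd1 l l' x
    have h3 : max 1 |x| ≤ R := max_le hR1 hxR.le
    have h4 : max 1 |x| ^ (d-1) ≤ R ^ (d-1) :=
      pow_le_pow_left₀ (le_trans zero_le_one (le_max_left _ _)) h3 _
    have h5 : (∑ i, |l' i - l i|) * max 1 |x| ^ (d - 1) ≤ (d * ε) * R ^ (d-1) := by
      refine mul_le_mul hl'.le h4 (by positivity) (by positivity)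
    have h6 : ε ≤ m / (d * R ^ (d - 1) + 1) := min_le_right _ _
    have h7 : (d * ε) * R ^ (d-1) < m := by
      rw [le_div_iff₀ (by positivity)] at h6
      have hRp : (0:ℝ) < R ^ (d-1) := by positivity
      nlinarith
    simp only [Set.mem_setOf_eq] at h1
    have h9 := abs_sub_le_iff.mp (h2.trans h5)
    linarith [h9.2]

lemma openNeg (d : ℕ) : IsOpen {l : Fin d → ℝ | ∃ x, deformedPoly d l x < 0} := by
  have : {l : Fin d → ℝ | ∃ x, deformedPoly d l x < 0}
      = ⋃ x : ℝ, {l | deformedPoly d l x < 0} := by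
    ext l; simp [Set.mem_iUnion]
  rw [this]
  exact isOpen_iUnion fun x => isOpen_lt (contL d x) continuous_const

lemma derivNeg {f : ℝ → ℝ} {c x₀ : ℝ} (hf : HasDerivAt f c x₀) (h0 : f x₀ = 0)
    (hc : c ≠ 0) : ∃ x, f x < 0 := by
  have hs := hasDerivAt_iff_tendsto_slope.mp hf
  rcases hc.lt_or_gt with hneg | hpos
  · -- c < 0 : take z > x₀, slope < 0, f z = slope * (z-x₀) < 0
    have hev : ∀ᶠ z in nhdsWithin x₀ {x₀}ᶜ, slope f x₀ z < 0 :=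
      hs.eventually (eventually_lt_nhds hneg)
    have hne : (nhdsWithin x₀ (Set.Ioi x₀)).NeBot := inferInstance
    have hle : nhdsWithin x₀ (Set.Ioi x₀) ≤ nhdsWithin x₀ {x₀}ᶜ :=
      nhdsWithin_mono _ (fun z hz => ne_of_gt hz)
    obtain ⟨z, hz1, hz2⟩ := ((hev.filter_mono hle).and eventually_mem_nhdsWithin).exists
    refine ⟨z, ?_⟩
    have hzx : x₀ < z := hz2
    have : slope f x₀ z = f z / (z - x₀) := by rw [slope_def_field, h0]; ring
    rw [this] at hz1
    have := (div_neg_iff.mp hz1)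
    rcases this with ⟨h1, h2⟩ | ⟨h1, h2⟩
    · linarith
    · exact h1
  · have hev : ∀ᶠ z in nhdsWithin x₀ {x₀}ᶜ, 0 < slope f x₀ z :=
      hs.eventually (eventually_gt_nhds hpos)
    have hle : nhdsWithin x₀ (Set.Iio x₀) ≤ nhdsWithin x₀ {x₀}ᶜ :=
      nhdsWithin_mono _ (fun z hz => ne_of_lt hz)
    obtain ⟨z, hz1, hz2⟩ := ((hev.filter_mono hle).and eventually_mem_nhdsWithin).exists
    refine ⟨z, ?_⟩
    have hzx : z < x₀ := hz2
    have : slope f x₀ z = f z / (z - x₀) := by rw [slope_def_field, h0]; ring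
    rw [this] at hz1
    rcases div_pos_iff.mp hz1 with ⟨h1, h2⟩ | ⟨h1, h2⟩
    · linarith
    · exact h1

lemma notDiscr_of_pos (d : ℕ) (l : Fin d → ℝ) (h : ∀ x, 0 < deformedPoly d l x) :
    l ∉ realDiscrB d := by
  rintro (h0 | ⟨x, hx, -⟩)
  · exact (h 0).ne' h0
  · exact (h x).ne' hx

lemma neg_of_not_pos (d : ℕ) (l : Fin d → ℝ) (hl : l ∉ realDiscrB d)
    (h : ¬ ∀ x, 0 < deformedPoly d l x) : ∃ x, deformedPoly d l x < 0 := by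
  push_neg at h
  obtain ⟨x₀, hx₀⟩ := h
  rcases eq_or_lt_of_le hx₀ with heq | hlt
  on_goal 1 => replace heq := heq.symm
  · -- P x₀ = 0, so deriv ≠ 0 since not in discriminant
    have hder : deriv (deformedPoly d l) x₀ ≠ 0 := by
      intro hd0
      exact hl (Or.inr ⟨x₀, heq.symm, hd0⟩)
    exact derivNeg ((diffX d l x₀).hasDerivAt) heq.symm hder
  · exact ⟨x₀, hlt⟩

lemma convexA (d : ℕ) : Convex ℝ {l : Fin d → ℝ | ∀ x, 0 < deformedPoly d l x} := by
  intro l hl l' hl' a b ha hb hab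
  intro x
  have e1 : ∑ i, (a * l i + b * l' i) * x ^ (i : ℕ)
      = a * ∑ i, l i * x ^ (i : ℕ) + b * ∑ i, l' i * x ^ (i : ℕ) := by
    rw [Finset.mul_sum, Finset.mul_sum, ← Finset.sum_add_distrib]
    congr 1; ext i; ring
  have h : deformedPoly d (a • l + b • l') x
      = a * deformedPoly d l x + b * deformedPoly d l' x := by
    unfold deformedPoly
    simp only [Pi.add_apply, Pi.smul_apply, smul_eq_mul]
    rw [e1]
    linear_combination (x ^ d) * hab.symm
  rw [h]
  set P := deformedPoly d l x
  set Q := deformedPoly d l' x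
  have hP : 0 < P := hl x
  have hQ : 0 < Q := hl' x
  have hm : 0 < min P Q := lt_min hP hQ
  have h1 : a * min P Q ≤ a * P := mul_le_mul_of_nonneg_left (min_le_left _ _) ha
  have h2 : b * min P Q ≤ b * Q := mul_le_mul_of_nonneg_left (min_le_right _ _) hb
  nlinarith

lemma poly_one (d : ℕ) (hd : 1 ≤ d) (x : ℝ) :
    deformedPoly d (fun i => if (i : ℕ) = 0 then 1 else 0) x = x ^ d + 1 := by
  haveI : NeZero d := ⟨by omega⟩
  unfold deformedPoly
  congr 1
  rw [Finset.sum_eq_single (0 : Fin d)]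
  · simp
  · intro i _ hi
    have : (i : ℕ) ≠ 0 := fun h => hi (Fin.ext (by simpa using h))
    simp [this]
  · intro h; exact absurd (Finset.mem_univ _) h

lemma lacuna_pos (d : ℕ) (l : Fin d → ℝ) (hpos : ∀ x, 0 < deformedPoly d l x)
    (p : ℝ × ℝ) (hp : p ∈ levelSetBminus d l) :
    ∃ q ∈ connectedComponentIn (levelSetBminus d l) p, q.1 = 0 := by
  have hp2 : p.2 ^ 2 = deformedPoly d l p.1 := by
    have := hp; simp only [levelSetBminus, Set.mem_setOf_eq] at this; linarith
  have hp2ne : p.2 ≠ 0 := by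
    intro h; rw [h] at hp2; simp at hp2; exact (hpos p.1).ne' hp2.symm
  set s : ℝ := if 0 < p.2 then 1 else -1 with hs
  set g : ℝ → ℝ × ℝ := fun x => (x, s * Real.sqrt (deformedPoly d l x)) with hg
  have hgc : Continuous g := by
    exact continuous_id.prodMk (continuous_const.mul ((contX d l).sqrt))
  have hsub : Set.range g ⊆ levelSetBminus d l := by
    rintro _ ⟨x, rfl⟩
    simp only [levelSetBminus, Set.mem_setOf_eq, hg]
    have : (s * Real.sqrt (deformedPoly d l x)) ^ 2
        = s ^ 2 * Real.sqrt (deformedPoly d l x) ^ 2 := by ring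
    rw [this, Real.sq_sqrt (hpos x).le]
    have hs2 : s ^ 2 = 1 := by rw [hs]; split <;> norm_num
    rw [hs2]; ring
  have hpg : p ∈ Set.range g := by
    refine ⟨p.1, ?_⟩
    have habs : Real.sqrt (deformedPoly d l p.1) = |p.2| := by
      rw [← hp2]; exact Real.sqrt_sq_eq_abs p.2
    rw [hg]
    simp only
    rw [habs, hs]
    rcases lt_or_ge 0 p.2 with h | h
    · simp [h, abs_of_pos h]
    · have hlt : p.2 < 0 := lt_of_le_of_ne h hp2ne
      simp [not_lt.mpr h, abs_of_neg hlt]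
  have hconn : IsPreconnected (Set.range g) := by
    rw [← Set.image_univ]
    exact isPreconnected_univ.image g hgc.continuousOn
  have hss := hconn.subset_connectedComponentIn hpg hsub
  exact ⟨g 0, hss ⟨0, rfl⟩, rfl⟩

lemma bad_component (d : ℕ) (hd : Even d) (hd1 : 1 ≤ d) (l : Fin d → ℝ) (x₁ : ℝ)
    (hneg : deformedPoly d l x₁ < 0) :
    ∃ p ∈ levelSetBminus d l, ∀ q ∈ connectedComponentIn (levelSetBminus d l) p, q.1 ≠ 0 := by
  obtain ⟨R, hR1, hR⟩ := growth' d hd hd1 l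
  set V := levelSetBminus d l with hV
  have hVnotx₁ : ∀ q ∈ V, q.1 ≠ x₁ := by
    intro q hq hq1
    have : deformedPoly d l q.1 - q.2 ^ 2 = 0 := hq
    rw [hq1] at this
    nlinarith [sq_nonneg q.2]
  rcases le_or_gt 0 x₁ with hx₁ | hx₁
  · -- take c to the right
    set c : ℝ := max R (x₁ + 1) with hc
    have hcpos : 0 < c := lt_of_lt_of_le (by linarith) (le_max_left _ _)
    have hPc : 0 < deformedPoly d l c := hR c (by rw [abs_of_pos hcpos]; exact le_max_left _ _)
    set p : ℝ × ℝ := (c, Real.sqrt (deformedPoly d l c)) with hp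
    have hpV : p ∈ V := by
      simp only [hV, levelSetBminus, Set.mem_setOf_eq, hp, Real.sq_sqrt hPc.le, sub_self]
    refine ⟨p, hpV, fun q hq => ?_⟩
    have hs : connectedComponentIn V p ⊆ {q : ℝ × ℝ | x₁ < q.1} := by
      refine IsPreconnected.subset_left_of_subset_union (v := {q : ℝ × ℝ | q.1 < x₁})
        (isOpen_lt continuous_const continuous_fst)
        (isOpen_lt continuous_fst continuous_const) ?_ ?_
        ?_ (isPreconnected_connectedComponentIn)
      · rw [Set.disjoint_left]; rintro q (h1 : x₁ < q.1) (h2 : q.1 < x₁); linarith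
      · intro q hq'
        have hqV := connectedComponentIn_subset V p hq'
        rcases lt_trichotomy q.1 x₁ with h | h | h
        · exact Or.inr h
        · exact absurd h (hVnotx₁ q hqV)
        · exact Or.inl h
      · exact ⟨p, mem_connectedComponentIn hpV, by
          simp only [Set.mem_setOf_eq, hp]; exact lt_of_lt_of_le (by linarith) (le_max_right _ _)⟩
    have : x₁ < q.1 := hs hq
    intro h; rw [h] at this; linarith
  · -- take c to the left
    set c : ℝ := min (-R) (x₁ - 1) with hc
    have hcneg : c < 0 := lt_of_le_of_lt (min_le_left _ _) (by linarith)
    have hPc : 0 < deformedPoly d l c := hR c (by rw [abs_of_neg hcneg]; have := min_le_left (-R) (x₁-1); linarith)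
    set p : ℝ × ℝ := (c, Real.sqrt (deformedPoly d l c)) with hp
    have hpV : p ∈ V := by
      simp only [hV, levelSetBminus, Set.mem_setOf_eq, hp, Real.sq_sqrt hPc.le, sub_self]
    refine ⟨p, hpV, fun q hq => ?_⟩
    have hs : connectedComponentIn V p ⊆ {q : ℝ × ℝ | q.1 < x₁} := by
      refine IsPreconnected.subset_left_of_subset_union (v := {q : ℝ × ℝ | x₁ < q.1})
        (isOpen_lt continuous_fst continuous_const)
        (isOpen_lt continuous_const continuous_fst) ?_ ?_
        ?_ (isPreconnected_connectedComponentIn)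
      · rw [Set.disjoint_left]; rintro q (h1 : q.1 < x₁) (h2 : x₁ < q.1); linarith
      · intro q hq'
        have hqV := connectedComponentIn_subset V p hq'
        rcases lt_trichotomy q.1 x₁ with h | h | h
        · exact Or.inl h
        · exact absurd h (hVnotx₁ q hqV)
        · exact Or.inr h
      · exact ⟨p, mem_connectedComponentIn hpV, by
          simp only [Set.mem_setOf_eq, hp]; exact lt_of_le_of_lt (min_le_right _ _) (by linarith)⟩
    have : q.1 < x₁ := hs hq
    intro h; rw [h] at this; linarith

/-- Exactly `1` connected component of the complement of the real discriminant of
`B_{2k}⁻` is a lacuna. -/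
theorem stmt12 (k : ℕ) (hk : 1 ≤ k) :
    Nat.card {Γ : ConnectedComponents ↥((realDiscrB (2 * k))ᶜ) //
      IsLacuna (2 * k) (levelSetBminus (2 * k)) Γ} = 1 := by
  set d := 2 * k with hdk
  have hd : Even d := even_two_mul k
  have hd1 : 1 ≤ d := by omega
  set A : Set (Fin d → ℝ) := {l | ∀ x, 0 < deformedPoly d l x} with hA
  set X := ↥((realDiscrB d)ᶜ) with hX
  set A' : Set X := Subtype.val ⁻¹' A with hA'
  -- the distinguished deformation x^d + 1
  set l₁ : Fin d → ℝ := fun i => if (i : ℕ) = 0 then 1 else 0 with hl₁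
  have hl₁A : l₁ ∈ A := by
    intro x
    rw [poly_one d hd1 x]
    have := hd.pow_nonneg x
    linarith
  have hl₁X : l₁ ∈ (realDiscrB d)ᶜ := notDiscr_of_pos d l₁ hl₁A
  set L₁ : X := ⟨l₁, hl₁X⟩ with hL₁
  -- A' is clopen in X
  have hA'open : IsOpen A' := (openA d hd hd1).preimage continuous_subtype_val
  have hA'closed : IsClosed A' := by
    rw [← isOpen_compl_iff]
    have : A'ᶜ = Subtype.val ⁻¹' {l | ∃ x, deformedPoly d l x < 0} := by
      ext l
      simp only [Set.mem_compl_iff, hA', Set.mem_preimage, hA, Set.mem_setOf_eq]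
      constructor
      · intro h; exact neg_of_not_pos d l.1 l.2 h
      · rintro ⟨x, hx⟩ h; exact absurd (h x) (not_lt.mpr hx.le)
    rw [this]
    exact (openNeg d).preimage continuous_subtype_val
  have hclopen : IsClopen A' := ⟨hA'closed, hA'open⟩
  -- A' is preconnected
  have hA'conn : IsPreconnected A' := by
    rw [← Topology.IsInducing.subtypeVal.isPreconnected_image]
    have himg : Subtype.val '' A' = A := by
      rw [Subtype.image_preimage_coe]
      ext l
      simp only [Set.mem_inter_iff, Set.mem_setOf_eq]
      exact ⟨fun h => h.2, fun h => ⟨notDiscr_of_pos d l h, h⟩⟩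
    rw [himg]
    exact (convexA d).isPreconnected
  -- membership in the component of L₁ equals membership in A'
  have hcc : ∀ l : X, ConnectedComponents.mk l = ConnectedComponents.mk L₁ ↔ l ∈ A' := by
    intro l
    rw [ConnectedComponents.coe_eq_coe']
    constructor
    · intro h
      exact hclopen.connectedComponent_subset (show L₁ ∈ A' from hl₁A) h
    · intro h
      exact hA'conn.subset_connectedComponent (show L₁ ∈ A' from hl₁A) h
  -- the distinguished component is a lacuna
  have hlac : IsLacuna d (levelSetBminus d) (ConnectedComponents.mk L₁) := by
    intro l hl
    have hlA : ∀ x, 0 < deformedPoly d l.1 x := (hcc l).mp hl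
    exact Or.inr fun p hp => lacuna_pos d l.1 hlA p hp
  -- any lacuna is the distinguished component
  rw [Nat.card_eq_one_iff_exists]
  refine ⟨⟨ConnectedComponents.mk L₁, hlac⟩, ?_⟩
  rintro ⟨Γ, hΓ⟩
  obtain ⟨l, rfl⟩ := ConnectedComponents.surjective_coe Γ
  ext
  simp only
  rw [hcc l]
  by_contra hnA
  have hneg : ∃ x, deformedPoly d l.1 x < 0 := neg_of_not_pos d l.1 l.2 hnA
  obtain ⟨x₁, hx₁⟩ := hneg
  obtain ⟨p, hpV, hpbad⟩ := bad_component d hd hd1 l.1 x₁ hx₁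
  rcases hΓ l rfl with hemp | hall
  · rw [hemp] at hpV; exact hpV
  · obtain ⟨q, hq, hq0⟩ := hall p hpV
    exact hpbad q hq hq0
end

section
/- Let P be a monic real polynomial of positive degree, let m ≥ 2, and let Q be a nondegenerate quadratic form on ℝ^m whose positive and negative inertia indices are both nonzero (i.e. Q is indefinite). Then the set W = {(x,u) ∈ ℝ × ℝ^m : P(x) + Q(u) = 0} is nonempty and every connected component of W intersects the hyperplane {x = 0}. -/
/-!
An indefinite real quadratic form `Q` has two isotropic vectors `w₁, w₂` with
`polar Q w₁ w₂ ≠ 0`; hence `Q` is surjective and `W = {f x + Q u = 0}` is nonempty, for any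
continuous `f` in place of `P`. If `(x, u) ∈ W` and `w` is isotropic with `polar Q u w ≠ 0`,
then `Q` is affine and nonconstant along `u + ℝ w`, so the path
`s ↦ (s • x, u + ((f x - f (s • x)) / polar Q u w) • w)` stays in `W` and joins `(x, u)` to the
hyperplane `x = 0`. If `u` is polar-orthogonal to both `w₁` and `w₂`, first slide inside `W`
along the line `u + ℝ w₁`, on which `Q` is constant, to `u + w₁`, which is not orthogonal to `w₂`.
-/

open QuadraticMap

namespace QuadraticMap

variable {R M N : Type*} [CommRing R] [AddCommGroup M] [Module R M] [AddCommGroup N] [Module R N]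

theorem map_smul_add_smul (Q : QuadraticMap R M N) (x y : R) (a b : M) :
    Q (x • a + y • b) = (x * x) • Q a + (x * y) • polar Q a b + (y * y) • Q b := by
  rw [QuadraticMap.map_add Q, QuadraticMap.map_smul, QuadraticMap.map_smul, polar_smul_left,
    polar_smul_right, smul_smul]
  abel

theorem map_add_smul_of_polar_eq_zero {Q : QuadraticMap R M N} {u w : M} (hw : Q w = 0)
    (huw : polar Q u w = 0) (t : R) : Q (u + t • w) = Q u := by
  rw [QuadraticMap.map_add Q, QuadraticMap.map_smul, polar_smul_right, hw, huw]
  simp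

end QuadraticMap

namespace QuadraticForm

variable {V : Type*} [AddCommGroup V] [Module ℝ V] (Q : QuadraticForm ℝ V)

theorem exists_isotropic_polar_ne_zero (hpos : ∃ a, 0 < Q a) (hneg : ∃ b, Q b < 0) :
    ∃ w₁ w₂, Q w₁ = 0 ∧ Q w₂ = 0 ∧ polar Q w₁ w₂ ≠ 0 := by
  obtain ⟨a, ha⟩ := hpos
  obtain ⟨b, hb⟩ := hneg
  set B := polar Q a b with hB
  set D := √(B ^ 2 - 4 * Q a * Q b)
  have hD : D ^ 2 = B ^ 2 - 4 * Q a * Q b := Real.sq_sqrt (by nlinarith [sq_nonneg B])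
  -- `y = B ± D` are the roots of
  -- `Q ((-2 * Q b) • a + y • b) = Q b * (y ^ 2 - 2 * B * y + 4 * Q a * Q b)`, and the polar of
  -- the two isotropic vectors is `Q` of their sum, `-4 * Q b * D ^ 2`.
  refine ⟨(-2 * Q b) • a + (B + D) • b, (-2 * Q b) • a + (B - D) • b, ?_, ?_, ?_⟩
  · rw [map_smul_add_smul, smul_eq_mul, smul_eq_mul, smul_eq_mul]
    linear_combination Q b * hD
  · rw [map_smul_add_smul, smul_eq_mul, smul_eq_mul, smul_eq_mul]
    linear_combination Q b * hD
  · have hsum : (-2 * Q b) • a + (B + D) • b + ((-2 * Q b) • a + (B - D) • b)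
        = (-4 * Q b) • a + (2 * B) • b := by module
    rw [polar, hsum, map_smul_add_smul, map_smul_add_smul, map_smul_add_smul]
    simp only [smul_eq_mul, ← hB]
    have hdisc : 0 < B ^ 2 - 4 * Q a * Q b := by nlinarith [sq_nonneg B]
    nlinarith [mul_pos (neg_pos.2 hb) hdisc]

theorem surjective_of_exists_pos_of_exists_neg (hpos : ∃ a, 0 < Q a) (hneg : ∃ b, Q b < 0) :
    Function.Surjective Q := by
  obtain ⟨w₁, w₂, h₁, h₂, h₁₂⟩ := Q.exists_isotropic_polar_ne_zero hpos hneg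
  refine fun c ↦ ⟨w₁ + (c / polar Q w₁ w₂) • w₂, ?_⟩
  rw [QuadraticMap.map_add Q, QuadraticMap.map_smul, polar_smul_right, h₁, h₂, smul_eq_mul,
    smul_eq_mul, div_mul_cancel₀ _ h₁₂]
  ring

theorem exists_isotropic_shift_polar_ne_zero (hpos : ∃ a, 0 < Q a) (hneg : ∃ b, Q b < 0)
    (u : V) : ∃ w₀ w, Q w₀ = 0 ∧ polar Q u w₀ = 0 ∧ Q w = 0 ∧ polar Q (u + w₀) w ≠ 0 := by
  obtain ⟨w₁, w₂, h₁, h₂, h₁₂⟩ := Q.exists_isotropic_polar_ne_zero hpos hneg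
  by_cases hu₁ : polar Q u w₁ = 0
  · by_cases hu₂ : polar Q u w₂ = 0
    · exact ⟨w₁, w₂, h₁, hu₁, h₂, by rwa [polar_add_left, hu₂, zero_add]⟩
    · exact ⟨0, w₂, map_zero Q, polar_zero_right Q u, h₂, by rwa [add_zero]⟩
  · exact ⟨0, w₁, map_zero Q, polar_zero_right Q u, h₁, by rwa [add_zero]⟩

end QuadraticForm

theorem mem_connectedComponentIn_of_continuous {T X : Type*} [TopologicalSpace T]
    [PreconnectedSpace T] [TopologicalSpace X] {F : Set X} {γ : T → X} (hγ : Continuous γ)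
    (hF : ∀ s, γ s ∈ F) (s t : T) : γ t ∈ connectedComponentIn F (γ s) :=
  (isPreconnected_range hγ).subset_connectedComponentIn (Set.mem_range_self s)
    (Set.range_subset_iff.2 hF) (Set.mem_range_self t)

section LevelSet

variable {E V : Type*} [TopologicalSpace E]
  [AddCommGroup V] [Module ℝ V] [TopologicalSpace V] [ContinuousAdd V] [ContinuousSMul ℝ V]
  {f : E → ℝ} {Q : QuadraticForm ℝ V} {x : E} {u w : V}

theorem mk_add_mem_connectedComponentIn_of_polar_eq_zero (hw : Q w = 0) (huw : polar Q u w = 0)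
    (hp : (x, u) ∈ {p : E × V | f p.1 + Q p.2 = 0}) :
    (x, u + w) ∈ connectedComponentIn {p : E × V | f p.1 + Q p.2 = 0} (x, u) := by
  have hγ : Continuous fun t : ℝ ↦ (x, u + t • w) := by fun_prop
  have hmem : ∀ t : ℝ, (x, u + t • w) ∈ {p : E × V | f p.1 + Q p.2 = 0} := fun t ↦ by
    simpa [QuadraticMap.map_add_smul_of_polar_eq_zero hw huw] using hp
  simpa using mem_connectedComponentIn_of_continuous hγ hmem 0 1

variable [AddCommGroup E] [Module ℝ E] [ContinuousSMul ℝ E]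

theorem mk_zero_mem_connectedComponentIn_of_polar_ne_zero (hf : Continuous f) (hw : Q w = 0)
    (huw : polar Q u w ≠ 0) (hp : (x, u) ∈ {p : E × V | f p.1 + Q p.2 = 0}) :
    (0, u + ((f x - f 0) / polar Q u w) • w) ∈
      connectedComponentIn {p : E × V | f p.1 + Q p.2 = 0} (x, u) := by
  set γ : ℝ → E × V := fun s ↦ (s • x, u + ((f x - f (s • x)) / polar Q u w) • w)
  have hγ : Continuous γ := by fun_prop
  have hmem : ∀ s, γ s ∈ {p : E × V | f p.1 + Q p.2 = 0} := fun s ↦ by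
    have hxu : f x + Q u = 0 := hp
    change f (s • x) + Q (u + _ • w) = 0
    rw [QuadraticMap.map_add Q, QuadraticMap.map_smul, polar_smul_right, hw, smul_eq_mul,
      smul_eq_mul, div_mul_cancel₀ _ huw]
    linarith
  simpa [γ] using mem_connectedComponentIn_of_continuous hγ hmem 1 0

theorem exists_mem_connectedComponentIn_fst_eq_zero (hf : Continuous f)
    (hpos : ∃ a, 0 < Q a) (hneg : ∃ b, Q b < 0) {p : E × V}
    (hp : p ∈ {p : E × V | f p.1 + Q p.2 = 0}) :
    ∃ r ∈ connectedComponentIn {p : E × V | f p.1 + Q p.2 = 0} p, r.1 = 0 := by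
  obtain ⟨x, u⟩ := p
  obtain ⟨w₀, w, hw₀, huw₀, hw, huw⟩ := Q.exists_isotropic_shift_polar_ne_zero hpos hneg u
  have hshift := mk_add_mem_connectedComponentIn_of_polar_eq_zero hw₀ huw₀ hp
  rw [connectedComponentIn_eq hshift]
  exact ⟨_, mk_zero_mem_connectedComponentIn_of_polar_ne_zero hf hw huw (connectedComponentIn_subset _ _ hshift), rfl⟩

end LevelSet

theorem stmt18_general (P : Polynomial ℝ)
    (m : ℕ) (Q : QuadraticForm ℝ (Fin m → ℝ))
    (hQpos : ∃ u, 0 < Q u) (hQneg : ∃ u, Q u < 0) :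
    Set.Nonempty {p : ℝ × (Fin m → ℝ) | P.eval p.1 + Q p.2 = 0} ∧
    ∀ p ∈ {p : ℝ × (Fin m → ℝ) | P.eval p.1 + Q p.2 = 0},
      ∃ r ∈ connectedComponentIn {p : ℝ × (Fin m → ℝ) | P.eval p.1 + Q p.2 = 0} p,
        r.1 = 0 := by
  obtain ⟨u, hu⟩ := Q.surjective_of_exists_pos_of_exists_neg hQpos hQneg (-P.eval 0)
  exact ⟨⟨(0, u), by simp [hu]⟩,
    fun _ ↦ exists_mem_connectedComponentIn_fst_eq_zero P.continuous hQpos hQneg⟩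

/-- Let `P` be a monic real polynomial of positive degree and `Q` a nondegenerate indefinite
quadratic form on `ℝ^m` (`m ≥ 2`), i.e. both inertia indices of `Q` are nonzero. Then the
real zero level set `W = {(x,u) : P(x) + Q(u) = 0}` of the stabilized `B`-type morsification
is nonempty and each of its connected components meets the boundary hyperplane `{x = 0}`. -/
theorem stmt18 (P : Polynomial ℝ) (hP : P.Monic) (hdeg : 0 < P.natDegree)
    (m : ℕ) (hm : 2 ≤ m) (Q : QuadraticForm ℝ (Fin m → ℝ))
    (hQnd : LinearMap.BilinForm.Nondegenerate (QuadraticMap.polarBilin Q))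
    (hQpos : ∃ u, 0 < Q u) (hQneg : ∃ u, Q u < 0) :
    Set.Nonempty {p : ℝ × (Fin m → ℝ) | P.eval p.1 + Q p.2 = 0} ∧
    ∀ p ∈ {p : ℝ × (Fin m → ℝ) | P.eval p.1 + Q p.2 = 0},
      ∃ r ∈ connectedComponentIn {p : ℝ × (Fin m → ℝ) | P.eval p.1 + Q p.2 = 0} p,
        r.1 = 0 :=
  stmt18_general P m Q hQpos hQneg
end

section
/- Let q be a real polynomial with q(0) ≠ 0, let m ≥ 2, and let Q be a quadratic form on ℝ^m. Consider W = {(x,y,z) ∈ ℝ × ℝ × ℝ^m : xy + q(y) + Q(z) = 0}. (1) If Q is nondegenerate and indefinite (both inertia indices nonzero), then W is connected. (2) If Q is positive definite and q(0) > 0, then W has exactly two connected components, one contained in {y > 0} and one contained in {y < 0}. -/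
/-!
For `y ≠ 0` the equation `x y + q(y) + f(z) = 0` determines `x = -(q(y) + f(z)) / y`, so the parts
of `W` over `{y > 0}` and `{y < 0}` are graphs over half-spaces and hence connected. The points of
`W` with `y = 0` form the lines `ℝ × {0} × {z}` with `f(z) = -q(0)`; for such `z` the polynomial
curve `t ↦ (-(q(t) - q(0)) / t, t, z)` lies in `W` and joins that line to both halves. Hence `W` is
connected as soon as the fibre `f⁻¹(-q(0))` is nonempty, as it is for an indefinite `Q`. When that
fibre is empty, as for `Q` positive definite and `q(0) > 0`, `W` is the disjoint union of its two
open halves, which are therefore its connected components.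
-/

open Set Polynomial

theorem QuadraticMap.continuous_of_finiteDimensional {E : Type*} [NormedAddCommGroup E]
    [NormedSpace ℝ E] [FiniteDimensional ℝ E] (Q : QuadraticForm ℝ E) : Continuous Q := by
  have hB : Continuous fun z => LinearMap.toContinuousLinearMap (Q.polarBilin z) :=
    (LinearMap.toContinuousLinearMap.toLinearMap ∘ₗ Q.polarBilin).continuous_of_finiteDimensional
  have hQ : ⇑Q = fun z => (1 / 2 : ℝ) * LinearMap.toContinuousLinearMap (Q.polarBilin z) z := by
    funext z
    simp [polar_self]
  rw [hQ]
  exact continuous_const.mul (hB.clm_apply continuous_id)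

theorem QuadraticMap.apply_sqrt_div_smul {M : Type*} [AddCommGroup M] [Module ℝ M]
    (Q : QuadraticForm ℝ M) {u : M} {c : ℝ} (hu : Q u ≠ 0) (hc : 0 ≤ c / Q u) :
    Q (√(c / Q u) • u) = c := by
  rw [QuadraticMap.map_smul, smul_eq_mul, Real.mul_self_sqrt hc, div_mul_cancel₀ c hu]

theorem QuadraticMap.surjective_of_pos_of_neg {M : Type*} [AddCommGroup M] [Module ℝ M]
    {Q : QuadraticForm ℝ M} {u v : M} (hu : 0 < Q u) (hv : Q v < 0) : Function.Surjective Q := by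
  intro c
  rcases le_or_gt 0 c with hc | hc
  · exact ⟨_, Q.apply_sqrt_div_smul hu.ne' (div_nonneg hc hu.le)⟩
  · exact ⟨_, Q.apply_sqrt_div_smul hv.ne (div_pos_of_neg_of_neg hc hv).le⟩

theorem connectedComponentIn_eq_inter_of_subset_union {α : Type*} [TopologicalSpace α]
    {s u v : Set α} (hu : IsOpen u) (hv : IsOpen v) (huv : Disjoint u v) (hs : s ⊆ u ∪ v)
    (hsu : IsPreconnected (s ∩ u)) {x : α} (hx : x ∈ s ∩ u) :
    connectedComponentIn s x = s ∩ u :=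
  subset_antisymm
    (subset_inter (connectedComponentIn_subset s x)
      (isPreconnected_connectedComponentIn.subset_left_of_subset_union hu hv huv
        ((connectedComponentIn_subset s x).trans hs)
        ⟨x, mem_connectedComponentIn hx.1, hx.2⟩))
    (hsu.subset_connectedComponentIn hx inter_subset_left)

section StabZeroSet

variable {E : Type*} (q : ℝ[X]) (f : E → ℝ)

def stabZeroSet : Set (ℝ × ℝ × E) := {p | p.1 * p.2.1 + q.eval p.2.1 + f p.2.2 = 0}

theorem mk_mem_stabZeroSet_of_ne_zero {y : ℝ} (hy : y ≠ 0) (z : E) :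
    (-(q.eval y + f z) / y, y, z) ∈ stabZeroSet q f := by
  simp only [stabZeroSet, mem_ofPred_eq]
  field_simp
  ring

theorem mk_zero_mem_stabZeroSet_iff {x : ℝ} {z : E} :
    (x, 0, z) ∈ stabZeroSet q f ↔ f z = -q.eval 0 := by
  simp only [stabZeroSet, mem_ofPred_eq, mul_zero, zero_add]
  constructor <;> intro h <;> linarith

theorem mk_divX_mem_stabZeroSet {z : E} (hz : f z = -q.eval 0) (t : ℝ) :
    (-q.divX.eval t, t, z) ∈ stabZeroSet q f := by
  have hq : q.eval t = q.divX.eval t * t + q.eval 0 := by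
    conv_lhs => rw [← divX_mul_X_add q]
    simp [coeff_zero_eq_eval_zero]
  simp only [stabZeroSet, mem_ofPred_eq, hz, hq]
  ring

theorem stabZeroSet_inter_eq_image {S : Set ℝ} (hS : (0 : ℝ) ∉ S) :
    stabZeroSet q f ∩ {p | p.2.1 ∈ S} =
      (fun w : ℝ × E => (-(q.eval w.1 + f w.2) / w.1, w.1, w.2)) '' (S ×ˢ univ) := by
  ext ⟨x, y, z⟩
  constructor
  · rintro ⟨hp, hy⟩
    have hy0 : y ≠ 0 := ne_of_mem_of_not_mem hy hS
    refine ⟨(y, z), ⟨hy, mem_univ z⟩, ?_⟩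
    simp only [stabZeroSet, mem_ofPred_eq] at hp
    simp only [Prod.mk.injEq, and_true]
    field_simp
    linarith
  · rintro ⟨⟨y', z'⟩, ⟨hy, -⟩, h⟩
    rw [← h]
    exact ⟨mk_mem_stabZeroSet_of_ne_zero q f (ne_of_mem_of_not_mem hy hS) z', hy⟩

def stabZeroSetHub (z : E) : Set (ℝ × ℝ × E) :=
  range (fun s : ℝ => (s, (0 : ℝ), z)) ∪
    (range (fun t => (-q.divX.eval t, t, z)) ∪ stabZeroSet q f ∩ {p | 0 < p.2.1} ∪
      stabZeroSet q f ∩ {p | p.2.1 < 0})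

variable {q f}

theorem stabZeroSetHub_subset {z : E} (hz : f z = -q.eval 0) :
    stabZeroSetHub q f z ⊆ stabZeroSet q f := by
  rintro p ((⟨s, rfl⟩ | (⟨t, rfl⟩ | ⟨hp, -⟩) | ⟨hp, -⟩))
  exacts [(mk_zero_mem_stabZeroSet_iff q f).2 hz, mk_divX_mem_stabZeroSet q f hz t, hp, hp]

theorem stabZeroSet_subset_of_forall_ne (hz : ∀ z, f z ≠ -q.eval 0) :
    stabZeroSet q f ⊆ {p | 0 < p.2.1} ∪ {p | p.2.1 < 0} := by
  rintro ⟨x, y, z⟩ hp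
  rcases lt_trichotomy y 0 with hy | rfl | hy
  · exact Or.inr hy
  · exact absurd ((mk_zero_mem_stabZeroSet_iff q f).1 hp) (hz z)
  · exact Or.inl hy

variable [TopologicalSpace E] [PreconnectedSpace E]

theorem isPreconnected_stabZeroSet_inter (hf : Continuous f) {S : Set ℝ}
    (hS : IsPreconnected S) (hS0 : (0 : ℝ) ∉ S) :
    IsPreconnected (stabZeroSet q f ∩ {p | p.2.1 ∈ S}) := by
  rw [stabZeroSet_inter_eq_image q f hS0]
  refine (hS.prod isPreconnected_univ).image _ (ContinuousOn.prodMk ?_ continuousOn_id)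
  refine ContinuousOn.div (by fun_prop) continuousOn_fst ?_
  rintro ⟨y, z⟩ ⟨hy, -⟩
  exact ne_of_mem_of_not_mem hy hS0

theorem isPreconnected_stabZeroSetHub (hf : Continuous f) {z : E}
    (hz : f z = -q.eval 0) : IsPreconnected (stabZeroSetHub q f z) := by
  have hcurve : IsPreconnected (range fun t => (-q.divX.eval t, t, z)) :=
    isPreconnected_range (by fun_prop)
  have hpos := isPreconnected_stabZeroSet_inter (q := q) hf isPreconnected_Ioi self_notMem_Ioi
  have hneg := isPreconnected_stabZeroSet_inter (q := q) hf isPreconnected_Iio self_notMem_Iio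
  unfold stabZeroSetHub
  refine (isPreconnected_range (by fun_prop)).union _ ⟨-q.divX.eval 0, rfl⟩
    (Or.inl (Or.inl ⟨0, rfl⟩)) ?_
  refine IsPreconnected.union _ (Or.inl ⟨-1, rfl⟩)
    ⟨mk_divX_mem_stabZeroSet q f hz (-1), (neg_one_lt_zero : (-1 : ℝ) < 0)⟩ ?_ hneg
  exact hcurve.union _ ⟨1, rfl⟩ ⟨mk_divX_mem_stabZeroSet q f hz 1, (one_pos : (0 : ℝ) < 1)⟩ hpos

theorem isConnected_stabZeroSet (hf : Continuous f) {z₀ : E}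
    (hz₀ : f z₀ = -q.eval 0) : IsConnected (stabZeroSet q f) := by
  have hbase : (-q.divX.eval 1, (1 : ℝ), z₀) ∈ stabZeroSet q f ∩ {p | 0 < p.2.1} :=
    ⟨mk_divX_mem_stabZeroSet q f hz₀ 1, (one_pos : (0 : ℝ) < 1)⟩
  have hbase_hub : ∀ z, (-q.divX.eval 1, (1 : ℝ), z₀) ∈ stabZeroSetHub q f z :=
    fun z => Or.inr (Or.inl (Or.inr hbase))
  refine ⟨⟨_, hbase.1⟩, isPreconnected_of_forall (-q.divX.eval 1, 1, z₀) fun ⟨x, y, z⟩ hp => ?_⟩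
  rcases lt_trichotomy y 0 with hy | rfl | hy
  · exact ⟨_, stabZeroSetHub_subset hz₀, hbase_hub z₀, Or.inr (Or.inr ⟨hp, hy⟩),
      isPreconnected_stabZeroSetHub hf hz₀⟩
  · have hz := (mk_zero_mem_stabZeroSet_iff q f).1 hp
    exact ⟨_, stabZeroSetHub_subset hz, hbase_hub z, Or.inl ⟨x, rfl⟩,
      isPreconnected_stabZeroSetHub hf hz⟩
  · exact ⟨_, stabZeroSetHub_subset hz₀, hbase_hub z₀, Or.inr (Or.inl (Or.inr ⟨hp, hy⟩)),
      isPreconnected_stabZeroSetHub hf hz₀⟩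

theorem connectedComponentIn_stabZeroSet_of_pos (hf : Continuous f)
    (hz : ∀ z, f z ≠ -q.eval 0) {p : ℝ × ℝ × E} (hp : p ∈ stabZeroSet q f) (hy : 0 < p.2.1) :
    connectedComponentIn (stabZeroSet q f) p = stabZeroSet q f ∩ {p | 0 < p.2.1} :=
  connectedComponentIn_eq_inter_of_subset_union (isOpen_lt continuous_const (by fun_prop))
    (isOpen_lt (by fun_prop) continuous_const) (disjoint_left.2 fun _ h₁ h₂ => lt_asymm h₁ h₂)
    (stabZeroSet_subset_of_forall_ne hz)
    (isPreconnected_stabZeroSet_inter hf isPreconnected_Ioi self_notMem_Ioi) ⟨hp, hy⟩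

theorem connectedComponentIn_stabZeroSet_of_neg (hf : Continuous f)
    (hz : ∀ z, f z ≠ -q.eval 0) {p : ℝ × ℝ × E} (hp : p ∈ stabZeroSet q f) (hy : p.2.1 < 0) :
    connectedComponentIn (stabZeroSet q f) p = stabZeroSet q f ∩ {p | p.2.1 < 0} :=
  connectedComponentIn_eq_inter_of_subset_union (isOpen_lt (by fun_prop) continuous_const)
    (isOpen_lt continuous_const (by fun_prop)) (disjoint_left.2 fun _ h₁ h₂ => lt_asymm h₁ h₂)
    ((stabZeroSet_subset_of_forall_ne hz).trans (union_comm _ _).le)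
    (isPreconnected_stabZeroSet_inter hf isPreconnected_Iio self_notMem_Iio) ⟨hp, hy⟩

end StabZeroSet

theorem stmt19_general (q : Polynomial ℝ)
    (m : ℕ) (Q : QuadraticForm ℝ (Fin m → ℝ)) :
    ((LinearMap.BilinForm.Nondegenerate (QuadraticMap.polarBilin Q) ∧
        (∃ u, 0 < Q u) ∧ (∃ u, Q u < 0)) →
      IsConnected {p : ℝ × ℝ × (Fin m → ℝ) | p.1 * p.2.1 + q.eval p.2.1 + Q p.2.2 = 0}) ∧
    ((Q.PosDef ∧ 0 < q.eval 0) →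
      ∃ Cpos Cneg : Set (ℝ × ℝ × (Fin m → ℝ)),
        (∀ p ∈ {p : ℝ × ℝ × (Fin m → ℝ) | p.1 * p.2.1 + q.eval p.2.1 + Q p.2.2 = 0},
          connectedComponentIn
            {p : ℝ × ℝ × (Fin m → ℝ) | p.1 * p.2.1 + q.eval p.2.1 + Q p.2.2 = 0} p = Cpos ∨
          connectedComponentIn
            {p : ℝ × ℝ × (Fin m → ℝ) | p.1 * p.2.1 + q.eval p.2.1 + Q p.2.2 = 0} p = Cneg) ∧
        (∃ p ∈ {p : ℝ × ℝ × (Fin m → ℝ) | p.1 * p.2.1 + q.eval p.2.1 + Q p.2.2 = 0},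
          connectedComponentIn
            {p : ℝ × ℝ × (Fin m → ℝ) | p.1 * p.2.1 + q.eval p.2.1 + Q p.2.2 = 0} p = Cpos) ∧
        (∃ p ∈ {p : ℝ × ℝ × (Fin m → ℝ) | p.1 * p.2.1 + q.eval p.2.1 + Q p.2.2 = 0},
          connectedComponentIn
            {p : ℝ × ℝ × (Fin m → ℝ) | p.1 * p.2.1 + q.eval p.2.1 + Q p.2.2 = 0} p = Cneg) ∧
        Cpos ≠ Cneg ∧
        Cpos ⊆ {p : ℝ × ℝ × (Fin m → ℝ) | 0 < p.2.1} ∧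
        Cneg ⊆ {p : ℝ × ℝ × (Fin m → ℝ) | p.2.1 < 0}) := by
  have hW : {p : ℝ × ℝ × (Fin m → ℝ) | p.1 * p.2.1 + q.eval p.2.1 + Q p.2.2 = 0} =
      stabZeroSet q Q := rfl
  have hQ := Q.continuous_of_finiteDimensional
  rw [hW]
  refine ⟨fun ⟨_, ⟨u, hu⟩, ⟨v, hv⟩⟩ => ?_, fun ⟨hQpos, hq₀⟩ => ?_⟩
  · obtain ⟨z₀, hz₀⟩ := QuadraticMap.surjective_of_pos_of_neg hu hv (-q.eval 0)
    exact isConnected_stabZeroSet hQ hz₀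
  have hfib : ∀ z, Q z ≠ -q.eval 0 := fun z h => by linarith [hQpos.nonneg z]
  have hpos := mk_mem_stabZeroSet_of_ne_zero q Q one_ne_zero 0
  have hneg := mk_mem_stabZeroSet_of_ne_zero q Q (neg_ne_zero.2 one_ne_zero) 0
  have hcomp_pos := connectedComponentIn_stabZeroSet_of_pos hQ hfib hpos one_pos
  refine ⟨_, _, fun p hp => ?_, ⟨_, hpos, hcomp_pos⟩,
    ⟨_, hneg, connectedComponentIn_stabZeroSet_of_neg hQ hfib hneg neg_one_lt_zero⟩,
    fun h => ?_, inter_subset_right, inter_subset_right⟩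
  · exact (stabZeroSet_subset_of_forall_ne hfib hp).imp
      (connectedComponentIn_stabZeroSet_of_pos hQ hfib hp)
      (connectedComponentIn_stabZeroSet_of_neg hQ hfib hp)
  · have hmem := h ▸ hcomp_pos ▸ mem_connectedComponentIn hpos
    exact lt_asymm one_pos (show (1 : ℝ) < 0 from hmem.2)

/-- The real zero level set `W = {(x,y,z) : xy + q(y) + Q(z) = 0}` of an (r,s)-stabilization
of a typical `C_k` morsification (`q(0) ≠ 0`):
(1) if `Q` is nondegenerate and indefinite then `W` is connected;
(2) if `Q` is positive definite and `q(0) > 0` then `W` has exactly two connected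
components, one contained in `{y > 0}` and one contained in `{y < 0}`. -/
theorem stmt19 (q : Polynomial ℝ) (hq : q.eval 0 ≠ 0)
    (m : ℕ) (hm : 2 ≤ m) (Q : QuadraticForm ℝ (Fin m → ℝ)) :
    ((LinearMap.BilinForm.Nondegenerate (QuadraticMap.polarBilin Q) ∧
        (∃ u, 0 < Q u) ∧ (∃ u, Q u < 0)) →
      IsConnected {p : ℝ × ℝ × (Fin m → ℝ) | p.1 * p.2.1 + q.eval p.2.1 + Q p.2.2 = 0}) ∧
    ((Q.PosDef ∧ 0 < q.eval 0) →
      ∃ Cpos Cneg : Set (ℝ × ℝ × (Fin m → ℝ)),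
        (∀ p ∈ {p : ℝ × ℝ × (Fin m → ℝ) | p.1 * p.2.1 + q.eval p.2.1 + Q p.2.2 = 0},
          connectedComponentIn
            {p : ℝ × ℝ × (Fin m → ℝ) | p.1 * p.2.1 + q.eval p.2.1 + Q p.2.2 = 0} p = Cpos ∨
          connectedComponentIn
            {p : ℝ × ℝ × (Fin m → ℝ) | p.1 * p.2.1 + q.eval p.2.1 + Q p.2.2 = 0} p = Cneg) ∧
        (∃ p ∈ {p : ℝ × ℝ × (Fin m → ℝ) | p.1 * p.2.1 + q.eval p.2.1 + Q p.2.2 = 0},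
          connectedComponentIn
            {p : ℝ × ℝ × (Fin m → ℝ) | p.1 * p.2.1 + q.eval p.2.1 + Q p.2.2 = 0} p = Cpos) ∧
        (∃ p ∈ {p : ℝ × ℝ × (Fin m → ℝ) | p.1 * p.2.1 + q.eval p.2.1 + Q p.2.2 = 0},
          connectedComponentIn
            {p : ℝ × ℝ × (Fin m → ℝ) | p.1 * p.2.1 + q.eval p.2.1 + Q p.2.2 = 0} p = Cneg) ∧
        Cpos ≠ Cneg ∧
        Cpos ⊆ {p : ℝ × ℝ × (Fin m → ℝ) | 0 < p.2.1} ∧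
        Cneg ⊆ {p : ℝ × ℝ × (Fin m → ℝ) | p.2.1 < 0}) :=
  stmt19_general q m Q
end
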